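/- arXiv:1301.4827 — 9 statements merged into one kernel-verified Lean document; each statement's English description precedes it below -/
import Mathlib

section
/- If T is a linear operator on a finite-dimensional normed vector space generating a bounded semigroup (i.e., there is C such that ‖T^n‖ ≤ C for all n ∈ ℕ), then every eigenvalue of T of modulus 1 has trivial Jordan blocks, i.e., the algebraic multiplicity of each eigenvalue λ with |λ| = 1 equals its geometric multiplicity. -/
/-- If `T` generates a bounded semigroup on a finite-dimensional complex normed space,
then every eigenvalue `λ` of modulus 1 has trivial Jordan blocks, i.e.
`ker (T - λ)^2 = ker (T - λ)`. -/
theorem stmt0 {V : Type} [NormedAddCommGroup V] [NormedSpace ℂ V] [FiniteDimensional ℂ V]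
    (T : V →L[ℂ] V) (C : ℝ) (hC : ∀ n : ℕ, ‖T ^ n‖ ≤ C)
    (lam : ℂ) (hlam : ‖lam‖ = 1) :
    LinearMap.ker ((((T - lam • (1 : V →L[ℂ] V)) ^ 2 : V →L[ℂ] V)) : V →ₗ[ℂ] V) =
      LinearMap.ker (((T - lam • (1 : V →L[ℂ] V) : V →L[ℂ] V)) : V →ₗ[ℂ] V) := by
  set S := T - lam • (1 : V →L[ℂ] V) with hSdef
  apply le_antisymm
  · intro v hv
    simp only [LinearMap.mem_ker] at hv ⊢
    set w := S v with hw
    have hSw : S w = 0 := by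
      have : (S ^ 2) v = S (S v) := by
        rw [pow_two]; rfl
      change (S ^ 2) v = 0 at hv
      rw [this] at hv; exact hv
    have hTv : T v = lam • v + w := by
      have : S v = T v - lam • v := by
        simp [hSdef, ContinuousLinearMap.sub_apply, ContinuousLinearMap.smul_apply]
      rw [hw, this]; abel
    have hTw : T w = lam • w := by
      have : S w = T w - lam • w := by
        simp [hSdef, ContinuousLinearMap.sub_apply, ContinuousLinearMap.smul_apply]
      rw [this] at hSw
      have := sub_eq_zero.mp hSw
      exact this
    -- key formula
    have key : ∀ n : ℕ, (T ^ (n + 1)) v = lam ^ (n + 1) • v + (((n : ℂ) + 1) * lam ^ n) • w := by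
      intro n
      induction n with
      | zero => simp [hTv]
      | succ n ih =>
        have hpow : T ^ (n + 2) = T * T ^ (n + 1) := by
          rw [← pow_succ']
        rw [hpow, ContinuousLinearMap.mul_apply, ih]
        rw [map_add, ContinuousLinearMap.map_smul, ContinuousLinearMap.map_smul, hTv, hTw]
        push_cast
        module
    -- norm bounds
    have bound : ∀ n : ℕ, ((n : ℝ) + 1) * ‖w‖ - ‖v‖ ≤ C * ‖v‖ := by
      intro n
      have hub : ‖(T ^ (n + 1)) v‖ ≤ C * ‖v‖ := by
        calc ‖(T ^ (n + 1)) v‖ ≤ ‖T ^ (n + 1)‖ * ‖v‖ := (T ^ (n + 1)).le_opNorm v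
        _ ≤ C * ‖v‖ := mul_le_mul_of_nonneg_right (hC _) (norm_nonneg v)
      have hn1 : ‖lam ^ (n + 1) • v‖ = ‖v‖ := by
        rw [norm_smul, norm_pow, hlam, one_pow, one_mul]
      have hn2 : ‖(((n : ℂ) + 1) * lam ^ n) • w‖ = ((n : ℝ) + 1) * ‖w‖ := by
        rw [norm_smul, norm_mul, norm_pow, hlam, one_pow, mul_one]
        congr 1
        rw [show ((n : ℂ) + 1) = ((n + 1 : ℕ) : ℂ) by push_cast; ring]
        rw [Complex.norm_natCast]
        push_cast; ring
      have hlow : ((n : ℝ) + 1) * ‖w‖ - ‖v‖ ≤ ‖(T ^ (n + 1)) v‖ := by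
        rw [key n]
        have h : ‖(((n : ℂ) + 1) * lam ^ n) • w‖ ≤
            ‖lam ^ (n + 1) • v + (((n : ℂ) + 1) * lam ^ n) • w‖ + ‖v‖ := by
          have h0 := norm_sub_le
            (lam ^ (n + 1) • v + (((n : ℂ) + 1) * lam ^ n) • w) (lam ^ (n + 1) • v)
          simpa [hn1] using h0
        rw [← hn2]
        linarith
      linarith
    -- conclude w = 0
    by_contra hwne
    have hwpos : 0 < ‖w‖ := norm_pos_iff.mpr hwne
    obtain ⟨n, hn⟩ := exists_nat_gt ((C * ‖v‖ + ‖v‖) / ‖w‖)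
    have := bound n
    have h2 : (C * ‖v‖ + ‖v‖) < (n : ℝ) * ‖w‖ := by
      rwa [div_lt_iff₀ hwpos] at hn
    nlinarith
  · intro x hx
    simp only [LinearMap.mem_ker] at hx ⊢
    rw [pow_two]
    show S (S x) = 0
    rw [show S x = 0 from hx, map_zero]
end

section
/- Let T be a power-bounded operator on a finite-dimensional normed complex vector space and T_∞ its asymptotic part (the sum of λ_i P_i over eigenvalues of modulus 1). Then ‖T^n − T_∞^n‖ → 0 as n → ∞. -/
open Finset

/-- The asymptotic part `T_∞ = ∑_{|λ_i| = 1} λ_i P_i` of an operator with Jordan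
decomposition data `(λ_i, P_i)`. -/
noncomputable def asymptoticPart {V : Type} [NormedAddCommGroup V] [NormedSpace ℂ V]
    {ι : Type} [Fintype ι] (lam : ι → ℂ) (P : ι → (V →L[ℂ] V)) : V →L[ℂ] V :=
  ∑ i ∈ Finset.univ.filter (fun i => ‖lam i‖ = 1), lam i • P i

section Aux
variable {R : Type*} [Ring R]

lemma aux_pow_add_pow (a b : R) (hab : a * b = 0) (hba : b * a = 0) (n : ℕ) :
    (a + b) ^ (n + 1) = a ^ (n + 1) + b ^ (n + 1) := by
  induction n with
  | zero => simp
  | succ n ih =>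
    have h1 : a ^ (n + 1) * b = 0 := by
      rw [pow_succ, mul_assoc, hab, mul_zero]
    have h2 : b ^ (n + 1) * a = 0 := by
      rw [pow_succ, mul_assoc, hba, mul_zero]
    rw [pow_succ, ih, add_mul, mul_add, mul_add, h1, h2, ← pow_succ, ← pow_succ]
    abel

lemma aux_sum_pow {ι : Type*} (s : Finset ι) (f : ι → R)
    (h : ∀ i ∈ s, ∀ j ∈ s, i ≠ j → f i * f j = 0) (n : ℕ) :
    (∑ i ∈ s, f i) ^ (n + 1) = ∑ i ∈ s, f i ^ (n + 1) := by
  induction n with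
  | zero => simp
  | succ n ih =>
    rw [pow_succ, ih, Finset.sum_mul]
    refine Finset.sum_congr rfl fun i hi => ?_
    rw [Finset.mul_sum]
    rw [Finset.sum_eq_single i (fun j hj hne => by
      rw [pow_succ, mul_assoc, h i hi j hj (Ne.symm hne), mul_zero]) (fun hni => absurd hi hni)]
    rw [← pow_succ]
end Aux


lemma aux_tendsto_pow_norm {V : Type} [NormedAddCommGroup V] [NormedSpace ℂ V]
    (P N : V →L[ℂ] V) (lam : ℂ) (hr : ‖lam‖ < 1)
    (hPN : P * N = N) (hNP : N * P = N) (hP : P * P = P)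
    (m : ℕ) (hm : N ^ (m + 1) = 0) :
    Filter.Tendsto (fun n : ℕ => ‖(lam • P + N) ^ n‖) Filter.atTop (nhds 0) := by
  set M := m + 1 with hM
  have hNk : ∀ k, M ≤ k → N ^ k = 0 := fun k hk => pow_eq_zero_of_le hk hm
  by_cases hlam : lam = 0
  · have hA : ∀ n, M ≤ n → ‖(lam • P + N) ^ n‖ = 0 := by
      intro n hn
      rw [hlam, zero_smul, zero_add, hNk n hn, norm_zero]
    refine Filter.Tendsto.congr' ?_ tendsto_const_nhds
    filter_upwards [Filter.eventually_ge_atTop M] with n hn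
    exact (hA n hn).symm
  have hr0 : 0 < ‖lam‖ := norm_pos_iff.2 hlam
  have hPpow : ∀ j, P ^ (j + 1) = P := by
    intro j
    induction j with
    | zero => simp
    | succ j ih => rw [pow_succ, ih, hP]
  have hcomm : Commute N (lam • P) := by
    unfold Commute SemiconjBy
    rw [mul_smul_comm, smul_mul_assoc, hNP, hPN]
  -- expansion for n ≥ M
  have hexp : ∀ n, M ≤ n → (lam • P + N) ^ n
      = ∑ k ∈ range M, N ^ k * (lam ^ (n - k) • P) * (n.choose k : V →L[ℂ] V) := by
    intro n hn
    rw [add_comm (lam • P) N, hcomm.add_pow n]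
    rw [← Finset.sum_subset (Finset.range_subset_range.2 (le_trans hn (Nat.le_succ n)))
        (fun k _ hk => by
          rw [hNk k (le_of_not_gt (fun h => hk (Finset.mem_range.2 h))), zero_mul, zero_mul])]
    refine Finset.sum_congr rfl fun k hk => ?_
    have hkM : k < M := Finset.mem_range.1 hk
    have hnk : ∃ t, n - k = t + 1 := by
      refine ⟨n - k - 1, ?_⟩
      omega
    obtain ⟨t, ht⟩ := hnk
    rw [smul_pow, ht, hPpow]
  -- norm bound
  set g : ℕ → ℕ → ℝ := fun k n => (‖N ^ k‖ * ‖P‖) * (‖lam‖ ^ (n - k) * (n.choose k : ℝ))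
    with hg
  have hbound : ∀ n, M ≤ n → ‖(lam • P + N) ^ n‖ ≤ ∑ k ∈ range M, g k n := by
    intro n hn
    rw [hexp n hn]
    refine le_trans (norm_sum_le _ _) (Finset.sum_le_sum fun k _ => ?_)
    have h1 : ‖N ^ k * (lam ^ (n - k) • P) * (n.choose k : V →L[ℂ] V)‖
        ≤ ‖N ^ k * (lam ^ (n - k) • P)‖ * ‖(n.choose k : V →L[ℂ] V)‖ := norm_mul_le _ _
    have h2 : ‖(n.choose k : V →L[ℂ] V)‖ ≤ (n.choose k : ℝ) := by
      have : (n.choose k : V →L[ℂ] V) = (n.choose k : ℕ) • (1 : V →L[ℂ] V) := by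
        simp
      rw [this]
      refine le_trans norm_nsmul_le ?_
      have := ContinuousLinearMap.norm_id_le (E := V) (𝕜 := ℂ)
      calc (n.choose k : ℝ) * ‖(1 : V →L[ℂ] V)‖ ≤ (n.choose k : ℝ) * 1 := by
            exact mul_le_mul_of_nonneg_left this (by positivity)
        _ = (n.choose k : ℝ) := mul_one _
    have h3 : ‖N ^ k * (lam ^ (n - k) • P)‖ ≤ ‖N ^ k‖ * (‖lam‖ ^ (n - k) * ‖P‖) := by
      refine le_trans (norm_mul_le _ _) ?_
      have hns : ‖lam ^ (n - k) • P‖ ≤ ‖lam ^ (n - k)‖ * ‖P‖ :=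
        ContinuousLinearMap.opNorm_smul_le _ _
      rw [norm_pow] at hns
      exact mul_le_mul_of_nonneg_left hns (norm_nonneg _)
    calc ‖N ^ k * (lam ^ (n - k) • P) * (n.choose k : V →L[ℂ] V)‖
        ≤ (‖N ^ k‖ * (‖lam‖ ^ (n - k) * ‖P‖)) * (n.choose k : ℝ) := by
          refine le_trans h1 (mul_le_mul h3 h2 (norm_nonneg _) ?_)
          positivity
      _ = g k n := by rw [hg]; ring
  -- each g k tends to 0
  have hgk : ∀ k ∈ range M, Filter.Tendsto (fun n => g k n) Filter.atTop (nhds 0) := by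
    intro k _
    have hc : Filter.Tendsto
        (fun n : ℕ => ((‖N ^ k‖ * ‖P‖) / ‖lam‖ ^ k) * ((n : ℝ) ^ k * ‖lam‖ ^ n))
        Filter.atTop (nhds 0) := by
      have := (tendsto_pow_const_mul_const_pow_of_lt_one k (le_of_lt hr0) hr).const_mul
        ((‖N ^ k‖ * ‖P‖) / ‖lam‖ ^ k)
      simpa using this
    refine squeeze_zero' ?_ ?_ hc
    · filter_upwards with n
      rw [hg]; positivity
    · filter_upwards [Filter.eventually_ge_atTop k] with n hn
      have hpow : ‖lam‖ ^ (n - k) = ‖lam‖ ^ n / ‖lam‖ ^ k := by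
        rw [eq_div_iff (by positivity), ← pow_add]
        congr 1
        omega
      have hch : (n.choose k : ℝ) ≤ (n : ℝ) ^ k := by
        exact_mod_cast Nat.cast_le.2 (Nat.choose_le_pow n k)
      rw [hg]
      calc (‖N ^ k‖ * ‖P‖) * (‖lam‖ ^ (n - k) * (n.choose k : ℝ))
          ≤ (‖N ^ k‖ * ‖P‖) * (‖lam‖ ^ (n - k) * (n : ℝ) ^ k) := by
            refine mul_le_mul_of_nonneg_left (mul_le_mul_of_nonneg_left hch (by positivity)) ?_
            positivity
        _ = ((‖N ^ k‖ * ‖P‖) / ‖lam‖ ^ k) * ((n : ℝ) ^ k * ‖lam‖ ^ n) := by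
            rw [hpow]; field_simp
  have hsum : Filter.Tendsto (fun n => ∑ k ∈ range M, g k n) Filter.atTop (nhds 0) := by
    have := tendsto_finset_sum (range M) hgk
    simpa using this
  refine squeeze_zero' ?_ ?_ hsum
  · filter_upwards with n using norm_nonneg _
  · filter_upwards [Filter.eventually_ge_atTop M] with n hn using hbound n hn


/-- For a power-bounded operator `T` with asymptotic part `T_∞`,
`‖T^n - T_∞^n‖ → 0` as `n → ∞`. -/
theorem stmt2 {V : Type} [NormedAddCommGroup V] [NormedSpace ℂ V] [FiniteDimensional ℂ V]
    (T : V →L[ℂ] V) (C : ℝ) (hC : ∀ n : ℕ, ‖T ^ n‖ ≤ C)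
    {ι : Type} [Fintype ι] [DecidableEq ι]
    (lam : ι → ℂ) (P N : ι → (V →L[ℂ] V))
    (hinj : Function.Injective lam)
    (hT : T = ∑ i, (lam i • P i + N i))
    (hPP : ∀ i j, P i * P j = if i = j then P i else 0)
    (hsum : ∑ i, P i = 1)
    (hNP : ∀ i, N i * P i = N i)
    (hPN : ∀ i, P i * N i = N i)
    (hNnil : ∀ i, IsNilpotent (N i)) :
    Filter.Tendsto (fun n : ℕ => ‖T ^ n - (asymptoticPart lam P) ^ n‖)
      Filter.atTop (nhds 0) := by
  classical
  set A : ι → (V →L[ℂ] V) := fun i => lam i • P i + N i with hA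
  have hP2 : ∀ i, P i * P i = P i := fun i => by simpa using hPP i i
  have hPP0 : ∀ i j, i ≠ j → P i * P j = 0 := fun i j h => by simpa [h] using hPP i j
  have hNP0 : ∀ i j, i ≠ j → N i * P j = 0 := fun i j h => by
    rw [← hNP i, mul_assoc, hPP0 i j h, mul_zero]
  have hPN0 : ∀ i j, i ≠ j → P i * N j = 0 := fun i j h => by
    rw [← hPN j, ← mul_assoc, hPP0 i j h, zero_mul]
  have hPA0 : ∀ i j, i ≠ j → P i * A j = 0 := fun i j h => by
    simp only [hA]
    rw [mul_add, mul_smul_comm, hPP0 i j h, hPN0 i j h, smul_zero, add_zero]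
  have hPA : ∀ i, P i * A i = A i := fun i => by
    simp only [hA]
    rw [mul_add, mul_smul_comm, hP2 i, hPN i]
  have hAP0 : ∀ i j, i ≠ j → A i * P j = 0 := fun i j h => by
    simp only [hA]
    rw [add_mul, smul_mul_assoc, hPP0 i j h, hNP0 i j h, smul_zero, add_zero]
  have hAA0 : ∀ i j, i ≠ j → A i * A j = 0 := fun i j h => by
    rw [← hPA j, ← mul_assoc, hAP0 i j h, zero_mul]
  have hTA : T = ∑ i, A i := hT
  have hPT : ∀ i n, P i * T ^ (n + 1) = A i ^ (n + 1) := by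
    intro i n
    induction n with
    | zero =>
      rw [pow_one, pow_one, hTA, Finset.mul_sum]
      rw [Finset.sum_eq_single i (fun j _ hne => hPA0 i j (Ne.symm hne))
        (fun h => absurd (Finset.mem_univ i) h)]
      exact hPA i
    | succ n ih =>
      rw [pow_succ, ← mul_assoc, ih, hTA, Finset.mul_sum]
      rw [Finset.sum_eq_single i (fun j _ hne => by
        rw [pow_succ, mul_assoc, hAA0 i j (Ne.symm hne), mul_zero])
        (fun h => absurd (Finset.mem_univ i) h)]
      rw [← pow_succ]
  have hAbd : ∀ i n, ‖A i ^ (n + 1)‖ ≤ ‖P i‖ * C := by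
    intro i n
    rw [← hPT i n]
    refine le_trans (norm_mul_le _ _) ?_
    exact mul_le_mul_of_nonneg_left (hC (n + 1)) (norm_nonneg _)
  have claim1 : ∀ i, ‖lam i‖ = 1 → N i = 0 := by
    intro i h1
    by_contra hNne
    obtain ⟨m0, hm0⟩ := hNnil i
    have hex : ∃ k, N i ^ k = 0 := ⟨m0, hm0⟩
    have hk0 : N i ^ (Nat.find hex) = 0 := Nat.find_spec hex
    have hk2 : 2 ≤ Nat.find hex := by
      by_contra hlt
      push_neg at hlt
      interval_cases h : (Nat.find hex)
      · simp only [pow_zero] at hk0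
        exact hNne (by rw [← mul_one (N i), hk0, mul_zero])
      · simp only [pow_one] at hk0
        exact hNne hk0
    obtain ⟨t, ht⟩ : ∃ t, Nat.find hex = t + 2 := ⟨Nat.find hex - 2, by omega⟩
    have hNt1 : N i ^ (t + 1) ≠ 0 := Nat.find_min hex (by omega)
    obtain ⟨x, hx⟩ : ∃ x, (N i ^ (t + 1)) x ≠ 0 := by
      by_contra hxx
      push_neg at hxx
      exact hNt1 (ContinuousLinearMap.ext fun y => by simpa using hxx y)
    set w := (N i ^ (t + 1)) x with hw
    set v := (P i) ((N i ^ t) x) with hv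
    have hNv : N i v = w := by
      have h' : (N i * P i) ((N i ^ t) x) = N i ((N i ^ t) x) := by rw [hNP i]
      simp only [ContinuousLinearMap.mul_apply] at h'
      rw [hv, hw, h', ← ContinuousLinearMap.mul_apply, ← pow_succ']
    have hPv : P i v = v := by
      rw [hv, ← ContinuousLinearMap.mul_apply, hP2 i]
    have hPw : P i w = w := by
      have h' : P i * N i ^ (t + 1) = N i ^ (t + 1) := by
        rw [pow_succ', ← mul_assoc, hPN i]
      rw [hw, ← ContinuousLinearMap.mul_apply, h']
    have hNw : N i w = 0 := by
      rw [hw, ← ContinuousLinearMap.mul_apply, ← pow_succ', ← ht, hk0]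
      simp
    have hAv : A i v = lam i • v + w := by
      simp only [hA, ContinuousLinearMap.add_apply, ContinuousLinearMap.smul_apply]
      rw [hPv, hNv]
    have hAw : A i w = lam i • w := by
      simp only [hA, ContinuousLinearMap.add_apply, ContinuousLinearMap.smul_apply]
      rw [hPw, hNw, add_zero]
    have key : ∀ n : ℕ, (A i ^ (n + 1)) v
        = (lam i ^ (n + 1)) • v + (((n : ℂ) + 1) * lam i ^ n) • w := by
      intro n
      induction n with
      | zero => simpa using hAv
      | succ n ih =>
        rw [pow_succ', ContinuousLinearMap.mul_apply, ih, map_add, map_smul, map_smul,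
          hAv, hAw]
        push_cast
        match_scalars <;> ring
    have hwpos : (0 : ℝ) < ‖w‖ := norm_pos_iff.2 hx
    obtain ⟨n, hn⟩ := exists_nat_gt ((‖P i‖ * C * ‖v‖ + ‖v‖) / ‖w‖)
    have hub : ‖(A i ^ (n + 1)) v‖ ≤ ‖P i‖ * C * ‖v‖ :=
      le_trans ((A i ^ (n + 1)).le_opNorm v)
        (mul_le_mul_of_nonneg_right (hAbd i n) (norm_nonneg v))
    have hcoef : ‖((n : ℂ) + 1) * lam i ^ n‖ = (n : ℝ) + 1 := by
      rw [norm_mul, norm_pow, h1, one_pow, mul_one]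
      have h2 : ((n : ℂ) + 1) = ((n + 1 : ℕ) : ℂ) := by push_cast; ring
      rw [h2, Complex.norm_natCast]
      push_cast; ring
    have hlow : ((n : ℝ) + 1) * ‖w‖ ≤ ‖(A i ^ (n + 1)) v‖ + ‖v‖ := by
      have h2 : (((n : ℂ) + 1) * lam i ^ n) • w
          = (A i ^ (n + 1)) v - (lam i ^ (n + 1)) • v := by
        rw [key n]; abel
      calc ((n : ℝ) + 1) * ‖w‖ = ‖(((n : ℂ) + 1) * lam i ^ n) • w‖ := by
            rw [norm_smul, hcoef]
        _ = ‖(A i ^ (n + 1)) v - (lam i ^ (n + 1)) • v‖ := by rw [h2]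
        _ ≤ ‖(A i ^ (n + 1)) v‖ + ‖(lam i ^ (n + 1)) • v‖ := norm_sub_le _ _
        _ = ‖(A i ^ (n + 1)) v‖ + ‖v‖ := by
            rw [norm_smul, norm_pow, h1, one_pow, one_mul]
    rw [div_lt_iff₀ hwpos] at hn
    nlinarith [norm_nonneg v]
  have claim2 : ∀ i, 1 < ‖lam i‖ → A i = 0 := by
    intro i h1
    have hPz : P i = 0 := by
      by_contra hPne
      obtain ⟨y, hy⟩ : ∃ y, P i y ≠ 0 := by
        by_contra hyy
        push_neg at hyy
        exact hPne (ContinuousLinearMap.ext fun y => by simpa using hyy y)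
      obtain ⟨m0, hm0⟩ := hNnil i
      have hex : ∃ k, (N i ^ k) (P i y) = 0 := ⟨m0, by rw [hm0]; simp⟩
      have hk0 : (N i ^ (Nat.find hex)) (P i y) = 0 := Nat.find_spec hex
      have hk1 : 1 ≤ Nat.find hex := by
        by_contra hlt
        push_neg at hlt
        interval_cases h : (Nat.find hex)
        simp only [pow_zero, ContinuousLinearMap.one_apply] at hk0
        exact hy hk0
      obtain ⟨t, ht⟩ : ∃ t, Nat.find hex = t + 1 := ⟨Nat.find hex - 1, by omega⟩
      set v := (N i ^ t) (P i y) with hv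
      have hvne : v ≠ 0 := Nat.find_min hex (by omega)
      have hNv : N i v = 0 := by
        rw [hv, ← ContinuousLinearMap.mul_apply, ← pow_succ', ← ht]
        exact hk0
      have hPv : P i v = v := by
        cases t with
        | zero =>
          simp only [hv, pow_zero, ContinuousLinearMap.one_apply]
          rw [← ContinuousLinearMap.mul_apply, hP2 i]
        | succ s =>
          have h' : P i * N i ^ (s + 1) = N i ^ (s + 1) := by
            rw [pow_succ', ← mul_assoc, hPN i]
          rw [hv, ← ContinuousLinearMap.mul_apply, h']
      have hAv : A i v = lam i • v := by
        simp only [hA, ContinuousLinearMap.add_apply, ContinuousLinearMap.smul_apply]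
        rw [hPv, hNv, add_zero]
      have key : ∀ n : ℕ, (A i ^ n) v = (lam i ^ n) • v := by
        intro n
        induction n with
        | zero => simp
        | succ n ih =>
          rw [pow_succ', ContinuousLinearMap.mul_apply, ih, map_smul, hAv, smul_smul,
            ← pow_succ]
      obtain ⟨n, hn⟩ := pow_unbounded_of_one_lt (‖P i‖ * C) h1
      have hub : ‖(A i ^ (n + 1)) v‖ ≤ ‖P i‖ * C * ‖v‖ :=
        le_trans ((A i ^ (n + 1)).le_opNorm v)
          (mul_le_mul_of_nonneg_right (hAbd i n) (norm_nonneg v))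
      have hlow : ‖(A i ^ (n + 1)) v‖ = ‖lam i‖ ^ (n + 1) * ‖v‖ := by
        rw [key (n + 1), norm_smul, norm_pow]
      have hvpos : (0 : ℝ) < ‖v‖ := norm_pos_iff.2 hvne
      have h2 : ‖lam i‖ ^ n ≤ ‖lam i‖ ^ (n + 1) :=
        pow_le_pow_right₀ (le_of_lt h1) (Nat.le_succ n)
      nlinarith
    have hNz : N i = 0 := by rw [← hNP i, hPz, mul_zero]
    simp only [hA]
    rw [hPz, hNz, smul_zero, add_zero]
  -- main assembly
  set F := Finset.univ.filter (fun i => ‖lam i‖ = 1) with hF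
  have hS : asymptoticPart lam P = ∑ i ∈ F, lam i • P i := by
    rw [asymptoticPart, hF]
  have hAF : ∀ i ∈ F, A i = lam i • P i := by
    intro i hi
    have h1 : ‖lam i‖ = 1 := (Finset.mem_filter.1 hi).2
    have := claim1 i h1
    simp only [hA]
    rw [this, add_zero]
  set S := asymptoticPart lam P with hSdef
  set D := ∑ i ∈ Fᶜ, A i with hD
  have hTSD : T = S + D := by
    rw [hTA, ← Finset.sum_add_sum_compl F A, hS, hD]
    congr 1
    exact Finset.sum_congr rfl hAF
  have hSD : S * D = 0 := by
    rw [hS, hD, Finset.sum_mul_sum]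
    refine Finset.sum_eq_zero fun i hi => Finset.sum_eq_zero fun j hj => ?_
    have hij : i ≠ j := fun h => (Finset.mem_compl.1 hj) (h ▸ hi)
    rw [smul_mul_assoc, hPA0 i j hij, smul_zero]
  have hDS : D * S = 0 := by
    rw [hS, hD, Finset.sum_mul_sum]
    refine Finset.sum_eq_zero fun i hi => Finset.sum_eq_zero fun j hj => ?_
    have hij : j ≠ i := fun h => (Finset.mem_compl.1 hi) (h ▸ hj)
    rw [mul_smul_comm, hAP0 i j hij.symm, smul_zero]
  have hTn : ∀ n : ℕ, T ^ (n + 1) = S ^ (n + 1) + D ^ (n + 1) := fun n => by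
    rw [hTSD]; exact aux_pow_add_pow S D hSD hDS n
  have hDn : ∀ n : ℕ, D ^ (n + 1) = ∑ i ∈ Fᶜ, A i ^ (n + 1) := fun n =>
    aux_sum_pow _ _ (fun i _ j _ h => hAA0 i j h) n
  have hti : ∀ i ∈ Fᶜ, Filter.Tendsto (fun n : ℕ => ‖A i ^ (n + 1)‖)
      Filter.atTop (nhds 0) := by
    intro i hi
    have hne : ‖lam i‖ ≠ 1 := by
      intro h
      exact (Finset.mem_compl.1 hi) (Finset.mem_filter.2 ⟨Finset.mem_univ i, h⟩)
    rcases lt_or_gt_of_ne hne with hlt | hgt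
    · obtain ⟨m, hm⟩ := hNnil i
      have hm' : N i ^ (m + 1) = 0 := by rw [pow_succ, hm, zero_mul]
      have := (aux_tendsto_pow_norm (P i) (N i) (lam i) hlt (hPN i) (hNP i) (hP2 i)
        m hm').comp (Filter.tendsto_add_atTop_nat 1)
      simpa [hA, Function.comp_def] using this
    · have hA0 : A i = 0 := claim2 i hgt
      refine Filter.Tendsto.congr (fun n => ?_) tendsto_const_nhds
      rw [hA0, zero_pow (Nat.succ_ne_zero n), norm_zero]
  have hsumt : Filter.Tendsto (fun n : ℕ => ∑ i ∈ Fᶜ, ‖A i ^ (n + 1)‖)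
      Filter.atTop (nhds 0) := by
    have := tendsto_finset_sum Fᶜ hti
    simpa using this
  have hDt : Filter.Tendsto (fun n : ℕ => ‖T ^ (n + 1) - S ^ (n + 1)‖)
      Filter.atTop (nhds 0) := by
    refine squeeze_zero (fun n => norm_nonneg _) (fun n => ?_) hsumt
    rw [hTn n, add_sub_cancel_left, hDn n]
    exact norm_sum_le _ _
  exact (Filter.tendsto_add_atTop_iff_nat 1).1 hDt
end

section
/- Let T be a power-bounded operator (‖T^n‖ ≤ C for all n) on a finite-dimensional normed vector space, and let T_∞ be its asymptotic part. Then for every k ∈ ℕ, ‖T_∞^k‖ ≤ C. -/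
open Finset

open Filter Topology

private lemma pow_orth_sum {R : Type*} [Ring R] {ι : Type*} (s : Finset ι) (b : ι → R)
    (h : ∀ i ∈ s, ∀ j ∈ s, i ≠ j → b i * b j = 0) :
    ∀ n : ℕ, (∑ i ∈ s, b i) ^ (n + 1) = ∑ i ∈ s, b i ^ (n + 1) := by
  classical
  intro n
  induction n with
  | zero => simp
  | succ n ih =>
    rw [pow_succ, ih, Finset.sum_mul]
    refine Finset.sum_congr rfl fun i hi => ?_
    rw [Finset.mul_sum, Finset.sum_eq_single i
      (fun j hj hji => by rw [pow_succ, mul_assoc, h i hi j hj (Ne.symm hji), mul_zero])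
      (fun hi' => absurd hi hi'), ← pow_succ]


private lemma recur_lemma {ι : Type} [Fintype ι] (g : ι → ℂ) (hg : ∀ i, ‖g i‖ = 1) :
    ∀ ε > 0, ∀ M : ℕ, ∃ d, M ≤ d ∧ ∀ i, ‖g i ^ d - 1‖ < ε := by
  intro ε hε M
  set f : ℕ → (ι → ℂ) := fun n i => g i ^ n with hf
  have hball : ∀ n, f n ∈ Metric.closedBall (0 : ι → ℂ) 1 := by
    intro n
    rw [Metric.mem_closedBall, dist_zero_right]
    refine (pi_norm_le_iff_of_nonneg zero_le_one).2 fun i => ?_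
    rw [norm_pow, hg i, one_pow]
  obtain ⟨L, -, φ, hφ, hconv⟩ :=
    (isCompact_closedBall (0 : ι → ℂ) 1).tendsto_subseq hball
  obtain ⟨A, hA⟩ := (Metric.tendsto_atTop.1 hconv) (ε / 2) (by linarith)
  set b := max A (φ A + M) with hb
  have hφb : φ A + M ≤ φ b := le_trans (le_max_right _ _) (hφ.id_le b)
  refine ⟨φ b - φ A, by omega, fun i => ?_⟩
  have h1 : dist (f (φ b)) (f (φ A)) < ε := by
    have h2 := hA b (le_max_left _ _)
    have h3 := hA A le_rfl
    calc dist (f (φ b)) (f (φ A)) ≤ dist (f (φ b)) L + dist (f (φ A)) L :=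
          dist_triangle_right _ _ _
      _ < ε := by simp only [Function.comp] at h2 h3; linarith
  have h4 : dist (f (φ b) i) (f (φ A) i) < ε := lt_of_le_of_lt (dist_le_pi_dist _ _ i) h1
  rw [dist_eq_norm] at h4
  have h5 : g i ^ φ b - g i ^ φ A = g i ^ φ A * (g i ^ (φ b - φ A) - 1) := by
    rw [mul_sub, mul_one, ← pow_add]
    congr 2
    omega
  simp only [hf] at h4
  rw [h5, norm_mul, norm_pow, hg i, one_pow, one_mul] at h4
  exact h4

set_option maxHeartbeats 1600000 in
/-- For a power-bounded operator `T` (with constant `C`) and its asymptotic part `T_∞`,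
one has `‖T_∞^k‖ ≤ C` for every `k`. -/
theorem stmt3 {V : Type} [NormedAddCommGroup V] [NormedSpace ℂ V] [FiniteDimensional ℂ V]
    (T : V →L[ℂ] V) (C : ℝ) (hC : ∀ n : ℕ, ‖T ^ n‖ ≤ C)
    {ι : Type} [Fintype ι] [DecidableEq ι]
    (lam : ι → ℂ) (P N : ι → (V →L[ℂ] V))
    (hinj : Function.Injective lam)
    (hT : T = ∑ i, (lam i • P i + N i))
    (hPP : ∀ i j, P i * P j = if i = j then P i else 0)
    (hsum : ∑ i, P i = 1)
    (hNP : ∀ i, N i * P i = N i)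
    (hPN : ∀ i, P i * N i = N i)
    (hNnil : ∀ i, IsNilpotent (N i)) :
    ∀ k : ℕ, ‖(asymptoticPart lam P) ^ k‖ ≤ C := by
  intro k
  have hC0 : (0:ℝ) ≤ C := le_trans (norm_nonneg _) (hC 0)
  rcases Nat.eq_zero_or_pos k with rfl | hk
  · simpa using hC 0
  classical
  set B : ι → (V →L[ℂ] V) := fun i => lam i • P i + N i with hBdef
  -- orthogonality relations
  have hPP' : ∀ {i j : ι}, i ≠ j → P i * P j = 0 := by
    intro i j h; rw [hPP]; simp [h]
  have hPN' : ∀ {i j : ι}, i ≠ j → P i * N j = 0 := by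
    intro i j h; rw [← hPN j, ← mul_assoc, hPP' h, zero_mul]
  have hNP' : ∀ {i j : ι}, i ≠ j → N i * P j = 0 := by
    intro i j h; rw [← hNP i, mul_assoc, hPP' h, mul_zero]
  have hNN' : ∀ {i j : ι}, i ≠ j → N i * N j = 0 := by
    intro i j h; rw [← hPN j, ← mul_assoc, hNP' h, zero_mul]
  have hBB : ∀ {i j : ι}, i ≠ j → B i * B j = 0 := by
    intro i j h
    simp only [hBdef, add_mul, mul_add, smul_mul_assoc, mul_smul_comm,
      hPP' h, hPN' h, hNP' h, hNN' h, smul_zero, add_zero, zero_add]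
  have hPi : ∀ i, P i * P i = P i := fun i => by rw [hPP]; simp
  have hPpow : ∀ (i : ι) (n : ℕ), P i ^ (n + 1) = P i := by
    intro i n
    induction n with
    | zero => simp
    | succ n ih => rw [pow_succ, ih, hPi]
  have hPB : ∀ i, P i * B i = B i := by
    intro i
    simp only [hBdef, mul_add, mul_smul_comm, hPi, hPN]
  have hPBn : ∀ (i : ι) (n : ℕ), P i * B i ^ (n + 1) = B i ^ (n + 1) := by
    intro i n
    induction n with
    | zero => simpa using hPB i
    | succ n ih => rw [pow_succ, ← mul_assoc, ih]
  have hTn : ∀ n : ℕ, T ^ (n + 1) = ∑ i, B i ^ (n + 1) := by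
    intro n
    rw [hT]
    exact pow_orth_sum _ _ (fun i _ j _ h => hBB h) n
  have hPTn : ∀ (i : ι) (n : ℕ), P i * T ^ (n + 1) = B i ^ (n + 1) := by
    intro i n
    rw [hTn, Finset.mul_sum, Finset.sum_eq_single i
      (fun j _ hji => by
        rw [pow_succ', ← mul_assoc]
        have : P i * B j = 0 := by
          simp only [hBdef, mul_add, mul_smul_comm, hPP' (Ne.symm hji),
            hPN' (Ne.symm hji), smul_zero, add_zero]
        rw [this, zero_mul])
      (fun hi' => absurd (Finset.mem_univ i) hi')]
    exact hPBn i n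
  -- vector norm bound
  have hvec : ∀ (i : ι) (n : ℕ) (v : V), ‖(B i ^ (n + 1)) v‖ ≤ ‖P i‖ * (C * ‖v‖) := by
    intro i n v
    have h1 : (B i ^ (n + 1)) v = (P i) ((T ^ (n + 1)) v) := by
      rw [← hPTn i n]; rfl
    rw [h1]
    calc ‖(P i) ((T ^ (n + 1)) v)‖ ≤ ‖P i‖ * ‖(T ^ (n + 1)) v‖ :=
          (P i).le_opNorm _
      _ ≤ ‖P i‖ * (C * ‖v‖) := by
          refine mul_le_mul_of_nonneg_left ?_ (norm_nonneg _)
          calc ‖(T ^ (n + 1)) v‖ ≤ ‖T ^ (n + 1)‖ * ‖v‖ := (T ^ (n+1)).le_opNorm _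
            _ ≤ C * ‖v‖ := mul_le_mul_of_nonneg_right (hC _) (norm_nonneg _)
  -- N i = 0 when ‖lam i‖ = 1
  have hNzero : ∀ i, ‖lam i‖ = 1 → N i = 0 := by
    intro i hi
    by_contra hN
    have hex : ∃ m, N i ^ m = 0 := hNnil i
    set r0 := Nat.find hex with hr0def
    have hr0 : N i ^ r0 = 0 := Nat.find_spec hex
    have hr0ne : r0 ≠ 0 := by
      intro h
      rw [h, pow_zero] at hr0
      exact hN (by rw [← mul_one (N i), hr0, mul_zero])
    have hr0ne1 : r0 ≠ 1 := by
      intro h; rw [h, pow_one] at hr0; exact hN hr0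
    obtain ⟨s, hs⟩ : ∃ s, r0 = s + 2 := ⟨r0 - 2, by omega⟩
    have hNs1 : N i ^ (s + 1) ≠ 0 := Nat.find_min hex (by omega)
    obtain ⟨x, hx⟩ : ∃ x, (N i ^ (s + 1)) x ≠ 0 := by
      by_contra h
      push_neg at h
      exact hNs1 (ContinuousLinearMap.ext fun x => by simpa using h x)
    set u : V := (P i) ((N i ^ s) x) with hu
    have hNu : (N i) u = (N i ^ (s + 1)) x := by
      have h9 : N i * (P i * N i ^ s) = N i ^ (s + 1) := by
        rw [← mul_assoc, hNP, ← pow_succ']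
      calc (N i) u = (N i * (P i * N i ^ s)) x := rfl
        _ = (N i ^ (s + 1)) x := by rw [h9]
    have hNNu : (N i) ((N i) u) = 0 := by
      rw [hNu]
      have h9 : N i * N i ^ (s + 1) = 0 := by rw [← pow_succ', ← hs, hr0]
      calc (N i) ((N i ^ (s + 1)) x) = (N i * N i ^ (s + 1)) x := rfl
        _ = 0 := by rw [h9]; rfl
    have hPu : (P i) u = u := by
      calc (P i) u = (P i * P i) ((N i ^ s) x) := rfl
        _ = u := by rw [hPi]
    have hPNu : (P i) ((N i) u) = (N i) u := by
      calc (P i) ((N i) u) = (P i * N i) u := rfl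
        _ = (N i) u := by rw [hPN]
    have hBapp : ∀ w : V, (B i) w = lam i • (P i) w + (N i) w := by
      intro w; simp [hBdef]
    -- growth formula
    have hBu : ∀ n : ℕ, (B i ^ (n + 1)) u
        = lam i ^ (n + 1) • u + ((n : ℂ) + 1) • lam i ^ n • (N i) u := by
      intro n
      induction n with
      | zero =>
        rw [pow_one, hBapp u, hPu]
        push_cast
        module
      | succ n ih =>
        rw [pow_succ', ContinuousLinearMap.mul_apply, ih]
        simp only [map_add, map_smul]
        rw [hBapp u, hBapp ((N i) u), hPu, hPNu, hNNu, add_zero]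
        push_cast
        module
    -- contradiction
    have hNu0 : (N i) u ≠ 0 := by rw [hNu]; exact hx
    have hNupos : 0 < ‖(N i) u‖ := norm_pos_iff.2 hNu0
    obtain ⟨n, hn⟩ := exists_nat_gt ((‖P i‖ * (C * ‖u‖) + ‖u‖) / ‖(N i) u‖)
    have key := hvec i n u
    rw [hBu n] at key
    have h2 : ‖((n : ℂ) + 1) • lam i ^ n • (N i) u‖ = ((n : ℝ) + 1) * ‖(N i) u‖ := by
      rw [norm_smul, norm_smul, norm_pow, hi, one_pow, one_mul]
      congr 1
      have h9 : ((n : ℂ) + 1) = ((n + 1 : ℕ) : ℂ) := by push_cast; ring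
      rw [h9, Complex.norm_natCast]
      push_cast; ring
    have h3 : ‖lam i ^ (n + 1) • u‖ = ‖u‖ := by
      rw [norm_smul, norm_pow, hi, one_pow, one_mul]
    have h5 : ‖((n : ℂ) + 1) • lam i ^ n • (N i) u‖
        ≤ ‖lam i ^ (n + 1) • u + ((n : ℂ) + 1) • lam i ^ n • (N i) u‖
          + ‖lam i ^ (n + 1) • u‖ := by
      have := norm_sub_le (lam i ^ (n + 1) • u + ((n : ℂ) + 1) • lam i ^ n • (N i) u)
        (lam i ^ (n + 1) • u)
      simpa using this
    rw [h2, h3] at h5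
    have h4 : (‖P i‖ * (C * ‖u‖) + ‖u‖) < n * ‖(N i) u‖ := by
      rw [div_lt_iff₀ hNupos] at hn; linarith
    nlinarith [norm_nonneg ((N i) u)]
  -- blocks off the unit circle tend to zero
  have hBtend : ∀ i, ‖lam i‖ ≠ 1 →
      Tendsto (fun n => B i ^ n) atTop (𝓝 (0 : V →L[ℂ] V)) := by
    intro i hi
    rcases lt_or_gt_of_ne hi with hlt | hgt
    · -- case ‖lam i‖ < 1
      obtain ⟨r, hr⟩ := hNnil i
      have hr' : N i ^ (r + 1) = 0 := by rw [pow_succ, hr, zero_mul]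
      rcases eq_or_ne (lam i) 0 with h0 | h0
      · have hBN : B i = N i := by simp [hBdef, h0]
        have hev : ∀ᶠ n in atTop, (0 : V →L[ℂ] V) = B i ^ n := by
          filter_upwards [eventually_ge_atTop (r + 1)] with n hn
          rw [hBN, ← Nat.sub_add_cancel hn, pow_add, hr', mul_zero]
        exact tendsto_const_nhds.congr' hev
      · set ρ := ‖lam i‖ with hρ
        have hρ0 : 0 < ρ := norm_pos_iff.2 h0
        have hcomm : Commute (lam i • P i) (N i) := by
          unfold Commute SemiconjBy
          rw [smul_mul_assoc, mul_smul_comm, hPN, hNP]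
        -- reflected binomial formula
        have hform : ∀ n, r + 1 ≤ n → B i ^ n =
            ∑ j ∈ Finset.range (r + 1),
              (lam i • P i) ^ (n - j) * N i ^ (n - (n - j)) * (n.choose (n - j)) := by
          intro n hn
          have h1 : B i ^ n = ∑ m ∈ Finset.range (n + 1),
              (lam i • P i) ^ m * N i ^ (n - m) * (n.choose m) := hcomm.add_pow n
          have h2 := Finset.sum_range_reflect
            (fun m => (lam i • P i) ^ m * N i ^ (n - m) * ((n.choose m : ℕ) : V →L[ℂ] V)) (n + 1)
          simp only [Nat.add_sub_cancel] at h2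
          rw [h1, ← h2]
          rw [Finset.range_eq_Ico,
            ← Finset.sum_Ico_consecutive _ (Nat.zero_le (r + 1)) (by omega : r + 1 ≤ n + 1)]
          have h3 : ∀ j ∈ Finset.Ico (r + 1) (n + 1),
              (lam i • P i) ^ (n - j) * N i ^ (n - (n - j)) * ((n.choose (n - j) : ℕ) : V →L[ℂ] V) = 0 := by
            intro j hj
            rw [Finset.mem_Ico] at hj
            have hj' : n - (n - j) = j := by omega
            have h9 : N i ^ j = 0 := by
              rw [← Nat.sub_add_cancel hj.1, pow_add, hr', mul_zero]
            rw [hj', h9, mul_zero, zero_mul]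
          rw [Finset.sum_eq_zero h3, add_zero, Finset.range_eq_Ico]
        -- norm bound
        have hbound : ∀ n, r + 1 ≤ n → ‖B i ^ n‖ ≤
            ∑ j ∈ Finset.range (r + 1),
              (‖P i‖ * ‖N i ^ j‖ / ρ ^ j) * ((n : ℝ) ^ j * ρ ^ n) := by
          intro n hn
          rw [hform n hn]
          refine (norm_sum_le _ _).trans (Finset.sum_le_sum fun j hj => ?_)
          rw [Finset.mem_range] at hj
          have hjn : j ≤ n := by omega
          have hj1 : n - (n - j) = j := by omega
          have hnj1 : 1 ≤ n - j := by omega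
          have hPnj : P i ^ (n - j) = P i := by
            obtain ⟨m, hm⟩ : ∃ m, n - j = m + 1 := ⟨n - j - 1, by omega⟩
            rw [hm, hPpow]
          have hcast : ‖((n.choose (n - j) : ℕ) : V →L[ℂ] V)‖ ≤ (n : ℝ) ^ j := by
            refine (Nat.norm_cast_le _).trans ?_
            have h4 : (n.choose (n - j)) = n.choose j := Nat.choose_symm hjn ▸ rfl
            have h5 : (n.choose (n - j) : ℝ) ≤ (n : ℝ) ^ j := by
              rw [h4]
              exact_mod_cast Nat.cast_le.2 (Nat.choose_le_pow n j) |>.trans_eq (by push_cast; ring)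
            calc (n.choose (n - j) : ℝ) * ‖(1 : V →L[ℂ] V)‖
                ≤ (n.choose (n - j) : ℝ) * 1 := by
                  exact mul_le_mul_of_nonneg_left ContinuousLinearMap.norm_id_le (by positivity)
              _ ≤ (n : ℝ) ^ j := by rw [mul_one]; exact h5
          have hsm : ‖(lam i • P i) ^ (n - j)‖ ≤ ρ ^ (n - j) * ‖P i‖ := by
            rw [smul_pow, hPnj, norm_smul (lam i ^ (n - j)) (P i), norm_pow]
          have hρnj : ρ ^ (n - j) = ρ ^ n / ρ ^ j := by
            rw [eq_div_iff (pow_ne_zero j (ne_of_gt hρ0)), ← pow_add]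
            congr 1
            omega
          rw [hj1]
          calc ‖(lam i • P i) ^ (n - j) * N i ^ j * ((n.choose (n - j) : ℕ) : V →L[ℂ] V)‖
              ≤ ‖(lam i • P i) ^ (n - j) * N i ^ j‖ * ‖((n.choose (n - j) : ℕ) : V →L[ℂ] V)‖ :=
                norm_mul_le _ _
            _ ≤ (‖(lam i • P i) ^ (n - j)‖ * ‖N i ^ j‖) * ((n : ℝ) ^ j) := by
                refine mul_le_mul (norm_mul_le _ _) hcast (norm_nonneg _) (by positivity)
            _ ≤ ((ρ ^ (n - j) * ‖P i‖) * ‖N i ^ j‖) * ((n : ℝ) ^ j) := by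
                refine mul_le_mul_of_nonneg_right
                  (mul_le_mul_of_nonneg_right hsm (norm_nonneg _)) (by positivity)
            _ = (‖P i‖ * ‖N i ^ j‖ / ρ ^ j) * ((n : ℝ) ^ j * ρ ^ n) := by
                rw [hρnj]; field_simp
        -- limit of the bound
        have hD : Tendsto (fun n : ℕ => ∑ j ∈ Finset.range (r + 1),
            (‖P i‖ * ‖N i ^ j‖ / ρ ^ j) * ((n : ℝ) ^ j * ρ ^ n)) atTop (𝓝 0) := by
          have := tendsto_finset_sum (Finset.range (r + 1))
            (fun j (_ : j ∈ Finset.range (r + 1)) =>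
              ((tendsto_pow_const_mul_const_pow_of_lt_one j hρ0.le hlt).const_mul
                (‖P i‖ * ‖N i ^ j‖ / ρ ^ j)))
          simpa using this
        rw [tendsto_zero_iff_norm_tendsto_zero]
        exact squeeze_zero' (Filter.Eventually.of_forall fun n => norm_nonneg _)
          (Filter.eventually_atTop.2 ⟨r + 1, hbound⟩) hD
    · -- case ‖lam i‖ > 1 : B i = 0
      have hP0 : P i = 0 := by
        by_contra hP
        obtain ⟨x, hx⟩ : ∃ x, (P i) x ≠ 0 := by
          by_contra h
          push_neg at h
          exact hP (ContinuousLinearMap.ext fun x => by simpa using h x)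
        obtain ⟨r, hr⟩ := hNnil i
        have hex2 : ∃ t, (N i ^ t) ((P i) x) = 0 := ⟨r, by rw [hr]; rfl⟩
        set t0 := Nat.find hex2 with ht0def
        have ht0 : (N i ^ t0) ((P i) x) = 0 := Nat.find_spec hex2
        have ht0ne : t0 ≠ 0 := by
          intro h
          rw [h, pow_zero] at ht0
          exact hx (by simpa using ht0)
        obtain ⟨t, ht⟩ : ∃ t, t0 = t + 1 := ⟨t0 - 1, by omega⟩
        set w : V := (N i ^ t) ((P i) x) with hw
        have hw0 : w ≠ 0 := Nat.find_min hex2 (by omega)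
        have hNw : (N i) w = 0 := by
          have h9 : N i * N i ^ t = N i ^ t0 := by rw [← pow_succ', ht]
          calc (N i) w = (N i * N i ^ t) ((P i) x) := rfl
            _ = 0 := by rw [h9, ht0]
        have hPw : (P i) w = w := by
          rcases Nat.eq_zero_or_pos t with ht' | ht'
          · simp only [hw, ht', pow_zero]
            calc (P i) ((P i) x) = (P i * P i) x := rfl
              _ = (P i) x := by rw [hPi]
          · obtain ⟨s, hs⟩ : ∃ s, t = s + 1 := ⟨t - 1, by omega⟩
            have h9 : P i * N i ^ t = N i ^ t := by
              rw [hs, pow_succ', ← mul_assoc, hPN]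
            calc (P i) w = ((P i * N i ^ t) * P i) x := rfl
              _ = w := by rw [h9]; rfl
        have hBw : ∀ n : ℕ, (B i ^ (n + 1)) w = lam i ^ (n + 1) • w := by
          intro n
          induction n with
          | zero =>
            rw [pow_one, pow_one]
            show lam i • (P i) w + (N i) w = lam i • w
            rw [hPw, hNw, add_zero]
          | succ n ih =>
            rw [pow_succ, ContinuousLinearMap.mul_apply]
            show (B i ^ (n+1)) (lam i • (P i) w + (N i) w) = lam i ^ (n + 2) • w
            rw [hPw, hNw, add_zero, map_smul, ih, smul_smul, ← pow_succ']
        obtain ⟨n, hn⟩ := pow_unbounded_of_one_lt (‖P i‖ * C) hgt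
        have key := hvec i n w
        rw [hBw n, norm_smul, norm_pow] at key
        have hwpos : 0 < ‖w‖ := norm_pos_iff.2 hw0
        have h6 : ‖lam i‖ ^ n ≤ ‖lam i‖ ^ (n + 1) :=
          pow_le_pow_right₀ (le_of_lt hgt) (by omega)
        nlinarith [mul_le_mul_of_nonneg_right h6 (le_of_lt hwpos),
          mul_lt_mul_of_pos_right hn hwpos]
      have hN0 : N i = 0 := by rw [← hNP i, hP0, mul_zero]
      have hB0 : B i = 0 := by simp [hBdef, hP0, hN0]
      have hev : ∀ᶠ n in atTop, (0 : V →L[ℂ] V) = B i ^ n := by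
        filter_upwards [eventually_ge_atTop 1] with n hn
        rw [hB0, zero_pow (by omega)]
      exact tendsto_const_nhds.congr' hev
  -- final assembly
  obtain ⟨k0, rfl⟩ : ∃ k0, k = k0 + 1 := ⟨k - 1, by omega⟩
  set S := Finset.univ.filter (fun i : ι => ‖lam i‖ = 1) with hSdef
  have hAk : (asymptoticPart lam P) ^ (k0 + 1) = ∑ i ∈ S, lam i ^ (k0 + 1) • P i := by
    unfold asymptoticPart
    rw [pow_orth_sum S (fun i => lam i • P i)
      (fun i _ j _ h => by rw [smul_mul_assoc, mul_smul_comm, hPP' h, smul_zero, smul_zero]) k0]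
    exact Finset.sum_congr rfl fun i _ => by rw [smul_pow, hPpow]
  have hR : Tendsto (fun n => ∑ i ∈ Finset.univ.filter (fun i : ι => ¬ ‖lam i‖ = 1), B i ^ n)
      atTop (𝓝 0) := by
    have := tendsto_finset_sum (Finset.univ.filter (fun i : ι => ¬ ‖lam i‖ = 1))
      (fun i hi => hBtend i (by simpa using (Finset.mem_filter.1 hi).2))
    simpa using this
  refine le_of_forall_pos_le_add fun ε hε => ?_
  set Q : ℝ := ∑ i ∈ S, ‖P i‖ with hQdef
  have hQ0 : 0 ≤ Q := Finset.sum_nonneg fun i _ => norm_nonneg _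
  obtain ⟨M, hM⟩ := (Metric.tendsto_atTop.1 hR) (ε / 2) (by linarith)
  set g : ι → ℂ := fun i => if ‖lam i‖ = 1 then lam i else 1 with hgdef
  have hg : ∀ i, ‖g i‖ = 1 := by
    intro i
    simp only [hgdef]
    by_cases h : ‖lam i‖ = 1
    · rw [if_pos h]; exact h
    · rw [if_neg h]; exact norm_one
  have hQε : 0 < ε / (2 * (Q + 1)) := by positivity
  obtain ⟨d, hdM, hd⟩ := recur_lemma g hg (ε / (2 * (Q + 1))) hQε (max M 1)
  set n := k0 + 1 + d with hndef
  obtain ⟨m, hm⟩ : ∃ m, n = m + 1 := ⟨k0 + d, by omega⟩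
  have hsplit : T ^ n = (∑ i ∈ S, lam i ^ n • P i) +
      ∑ i ∈ Finset.univ.filter (fun i : ι => ¬ ‖lam i‖ = 1), B i ^ n := by
    rw [hm, hTn m, ← Finset.sum_filter_add_sum_filter_not Finset.univ (fun i : ι => ‖lam i‖ = 1)]
    congr 1
    refine Finset.sum_congr rfl fun i hi => ?_
    have hi1 : ‖lam i‖ = 1 := (Finset.mem_filter.1 hi).2
    have h9 : B i = lam i • P i := by rw [hBdef]; simp [hNzero i hi1]
    rw [h9, smul_pow, hPpow]
  -- bound on the S-part difference
  have b1 : ‖∑ i ∈ S, (lam i ^ (k0 + 1) - lam i ^ n) • P i‖ ≤ ε / 2 := by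
    have step : ∀ i ∈ S, ‖(lam i ^ (k0 + 1) - lam i ^ n) • P i‖
        ≤ (ε / (2 * (Q + 1))) * ‖P i‖ := by
      intro i hi
      have hi1 : ‖lam i‖ = 1 := by
        have := (Finset.mem_filter.1 hi).2
        simpa using this
      have hgi : g i = lam i := by simp only [hgdef]; rw [if_pos hi1]
      have hsc : ‖lam i ^ (k0 + 1) - lam i ^ n‖ < ε / (2 * (Q + 1)) := by
        have hpow : lam i ^ n = lam i ^ (k0 + 1) * lam i ^ d := by
          rw [hndef, pow_add]
        have h9 : lam i ^ (k0 + 1) - lam i ^ n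
            = lam i ^ (k0 + 1) * (1 - lam i ^ d) := by
          rw [hpow, mul_sub, mul_one]
        rw [h9, norm_mul, norm_pow, hi1, one_pow, one_mul, ← norm_neg, neg_sub]
        have := hd i
        rwa [hgi] at this
      rw [norm_smul (lam i ^ (k0 + 1) - lam i ^ n) (P i)]
      exact mul_le_mul_of_nonneg_right (le_of_lt hsc) (norm_nonneg _)
    calc ‖∑ i ∈ S, (lam i ^ (k0 + 1) - lam i ^ n) • P i‖
        ≤ ∑ i ∈ S, ‖(lam i ^ (k0 + 1) - lam i ^ n) • P i‖ := norm_sum_le _ _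
      _ ≤ ∑ i ∈ S, (ε / (2 * (Q + 1))) * ‖P i‖ := Finset.sum_le_sum step
      _ = (ε / (2 * (Q + 1))) * Q := by rw [← Finset.mul_sum]
      _ ≤ ε / 2 := by
          rw [div_mul_eq_mul_div, div_le_div_iff₀ (by positivity) (by norm_num)]
          nlinarith
  -- bound on remainder
  have b2 : ‖∑ i ∈ Finset.univ.filter (fun i : ι => ¬ ‖lam i‖ = 1), B i ^ n‖ < ε / 2 := by
    have hnM : M ≤ n := by
      have : M ≤ max M 1 := le_max_left _ _
      omega
    have := hM n hnM
    rwa [dist_zero_right] at this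
  -- conclude
  have hdiff : (asymptoticPart lam P) ^ (k0 + 1)
      = T ^ n + ((∑ i ∈ S, (lam i ^ (k0 + 1) - lam i ^ n) • P i)
        - ∑ i ∈ Finset.univ.filter (fun i : ι => ¬ ‖lam i‖ = 1), B i ^ n) := by
    rw [hAk, hsplit]
    simp only [sub_smul]
    rw [Finset.sum_sub_distrib]
    abel
  calc ‖(asymptoticPart lam P) ^ (k0 + 1)‖
      ≤ ‖T ^ n‖ + ‖(∑ i ∈ S, (lam i ^ (k0 + 1) - lam i ^ n) • P i)
          - ∑ i ∈ Finset.univ.filter (fun i : ι => ¬ ‖lam i‖ = 1), B i ^ n‖ := by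
        rw [hdiff]; exact norm_add_le _ _
    _ ≤ ‖T ^ n‖ + (‖∑ i ∈ S, (lam i ^ (k0 + 1) - lam i ^ n) • P i‖
          + ‖∑ i ∈ Finset.univ.filter (fun i : ι => ¬ ‖lam i‖ = 1), B i ^ n‖) := by
        exact add_le_add le_rfl (norm_sub_le _ _)
    _ ≤ C + ε := by
        have := hC n
        linarith
end

section
/- For every k ∈ ℕ, the operator T_∞^k lies in the closure of the set {T^n : n ∈ ℕ} in End(V), where T is power-bounded and T_∞ is its asymptotic part. -/
open Finset

open Filter


section Aux

variable {A : Type*} [NormedRing A] [NormedAlgebra ℂ A]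

lemma nmulP {P N : A} (hNP : N * P = N) : ∀ j, 1 ≤ j → N ^ j * P = N ^ j := by
  intro j hj
  cases j with
  | zero => omega
  | succ k => rw [pow_succ, mul_assoc, hNP]

lemma PmulnAux {P N : A} (hPN : P * N = N) : ∀ j, 1 ≤ j → P * N ^ j = N ^ j := by
  intro j hj
  cases j with
  | zero => omega
  | succ k => rw [pow_succ', ← mul_assoc, hPN]

lemma blockCommute (P N : A) (lam : ℂ) (hPN : P * N = N) (hNP : N * P = N) :
    Commute N (lam • P) := by
  show N * (lam • P) = (lam • P) * N
  rw [mul_smul_comm, smul_mul_assoc, hNP, hPN]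

lemma powIdem {P : A} (hP : P * P = P) : ∀ t, 1 ≤ t → P ^ t = P := by
  intro t ht
  cases t with
  | zero => omega
  | succ k => exact IsIdempotentElem.pow_succ_eq k hP

lemma block_step (P N : A) (lam : ℂ) (D : ℝ)
    (hP : P * P = P) (hPN : P * N = N) (hNP : N * P = N) (hlam : ‖lam‖ = 1)
    (hD : ∀ n : ℕ, 1 ≤ n → ‖(lam • P + N) ^ n‖ ≤ D)
    (j : ℕ) (hj : 1 ≤ j) (hj1 : N ^ (j + 1) = 0) : N ^ j = 0 := by
  have hcomm := blockCommute P N lam hPN hNP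
  have key : ∀ n : ℕ, 2 ≤ n →
      (lam • P + N) ^ n * N ^ (j - 1)
        = lam ^ n • (P * N ^ (j - 1)) + ((n : ℂ) * lam ^ (n - 1)) • N ^ j := by
    intro n hn
    rw [add_comm (lam • P) N, hcomm.add_pow, Finset.sum_mul]
    rw [← Finset.sum_range_add_sum_Ico _ (show 2 ≤ n + 1 by omega)]
    have h2 : ∑ m ∈ Finset.Ico 2 (n + 1),
        N ^ m * (lam • P) ^ (n - m) * (n.choose m : A) * N ^ (j - 1) = 0 := by
      refine Finset.sum_eq_zero fun m hm => ?_
      obtain ⟨hm2, hmn⟩ := Finset.mem_Ico.mp hm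
      have hNm : N ^ m * (lam • P) ^ (n - m) = lam ^ (n - m) • N ^ m := by
        rcases Nat.eq_zero_or_pos (n - m) with h | h
        · simp [h]
        · rw [smul_pow, powIdem hP _ h, mul_smul_comm, nmulP hNP m (by omega)]
      rw [hNm, smul_mul_assoc, smul_mul_assoc]
      have : N ^ m * (n.choose m : A) * N ^ (j - 1) = (n.choose m : A) * N ^ (m + (j - 1)) := by
        rw [(Nat.cast_commute (n.choose m) (N ^ m)).symm.eq, mul_assoc, ← pow_add]
      rw [this, pow_eq_zero_of_le (show j + 1 ≤ m + (j - 1) by omega) hj1, mul_zero, smul_zero]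
    rw [h2, add_zero, Finset.sum_range_succ, Finset.sum_range_one]
    have hNNj : N * N ^ (j - 1) = N ^ j := by
      rw [← pow_succ']
      congr 1
      omega
    congr 1
    · -- m = 0 term
      rw [pow_zero, one_mul, Nat.choose_zero_right, Nat.cast_one, mul_one, smul_pow,
        Nat.sub_zero, powIdem hP n (by omega), smul_mul_assoc]
    · -- m = 1 term
      rw [pow_one, Nat.choose_one_right, smul_pow, powIdem hP (n - 1) (by omega),
        mul_smul_comm, hNP, smul_mul_assoc, smul_mul_assoc]
      have hNj : N * (n : A) * N ^ (j - 1) = (n : ℂ) • N ^ j := by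
        rw [← (Nat.cast_commute (n : ℕ) N).eq, mul_assoc, hNNj, ← nsmul_eq_mul,
          Nat.cast_smul_eq_nsmul ℂ]
      rw [hNj, smul_smul, mul_comm]
  by_contra h0
  have hpos : 0 < ‖N ^ j‖ := norm_pos_iff.mpr h0
  set D' := D * ‖N ^ (j - 1)‖ + ‖P * N ^ (j - 1)‖ with hD'
  obtain ⟨n, hn⟩ := exists_nat_gt (max 2 (D' / ‖N ^ j‖))
  have hn2 : 2 ≤ n := by
    have := (le_max_left 2 (D' / ‖N ^ j‖)).trans_lt hn
    exact_mod_cast this.le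
  have hb : (n : ℝ) * ‖N ^ j‖ ≤ D' := by
    have e := key n hn2
    have e2 : ((n : ℂ) * lam ^ (n - 1)) • N ^ j
        = (lam • P + N) ^ n * N ^ (j - 1) - lam ^ n • (P * N ^ (j - 1)) := by
      rw [e]; abel
    calc (n : ℝ) * ‖N ^ j‖ = ‖((n : ℂ) * lam ^ (n - 1)) • N ^ j‖ := by
          rw [norm_smul, norm_mul, norm_pow lam, hlam, one_pow, mul_one, Complex.norm_natCast]
      _ = ‖(lam • P + N) ^ n * N ^ (j - 1) - lam ^ n • (P * N ^ (j - 1))‖ := by rw [e2]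
      _ ≤ ‖(lam • P + N) ^ n * N ^ (j - 1)‖ + ‖lam ^ n • (P * N ^ (j - 1))‖ := norm_sub_le _ _
      _ ≤ D * ‖N ^ (j - 1)‖ + ‖P * N ^ (j - 1)‖ := by
          gcongr
          · exact (norm_mul_le _ _).trans
              (mul_le_mul_of_nonneg_right (hD n (by omega)) (norm_nonneg _))
          · rw [norm_smul, norm_pow, hlam, one_pow, one_mul]
  have hlt : D' / ‖N ^ j‖ < n := (le_max_right _ _).trans_lt hn
  rw [div_lt_iff₀ hpos] at hlt
  linarith

lemma block_nilp_zero (P N : A) (lam : ℂ) (D : ℝ)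
    (hP : P * P = P) (hPN : P * N = N) (hNP : N * P = N) (hlam : ‖lam‖ = 1)
    (hD : ∀ n : ℕ, 1 ≤ n → ‖(lam • P + N) ^ n‖ ≤ D)
    (hnil : IsNilpotent N) : N = 0 := by
  obtain ⟨m, hm⟩ := hnil
  have main : ∀ m : ℕ, N ^ (m + 1) = 0 → N = 0 := by
    intro m
    induction m with
    | zero => intro h; simpa using h
    | succ m ih =>
      intro h
      exact ih (block_step P N lam D hP hPN hNP hlam hD (m + 1) (by omega) h)
  cases m with
  | zero =>
    have h1 : (1 : A) = 0 := by simpa using hm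
    calc N = N * 1 := (mul_one N).symm
      _ = 0 := by rw [h1, mul_zero]
  | succ m => exact main m hm


section Aux2

variable {A : Type*} [NormedRing A] [NormedAlgebra ℂ A]


variable {A : Type*} [NormedRing A] [NormedAlgebra ℂ A]


lemma block_decay (P N : A) (lam : ℂ)
    (hP : P * P = P) (hPN : P * N = N) (hNP : N * P = N) (hlam : ‖lam‖ < 1)
    (hnil : IsNilpotent N) :
    Tendsto (fun n : ℕ => (lam • P + N) ^ n) atTop (nhds 0) := by
  obtain ⟨m₀, hm₀⟩ := hnil
  set m := m₀ + 1 with hmdef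
  have hm : N ^ m = 0 := by rw [hmdef, pow_succ, hm₀, zero_mul]
  have hNt : ∀ t, m ≤ t → N ^ t = 0 := fun t ht => pow_eq_zero_of_le ht hm
  have hcomm : Commute N (lam • P) := by
    show N * (lam • P) = (lam • P) * N
    rw [mul_smul_comm, smul_mul_assoc, hNP, hPN]
  set K : ℝ := max ‖(1 : A)‖ ‖P‖ with hK
  have hPt : ∀ t : ℕ, ‖P ^ t‖ ≤ K := by
    intro t
    cases t with
    | zero => rw [pow_zero]; exact le_max_left _ _
    | succ k => rw [IsIdempotentElem.pow_succ_eq k hP]; exact le_max_right _ _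
  have hbound : ∀ n, m ≤ n → ‖(lam • P + N) ^ n‖
      ≤ ∑ t ∈ range m, (n.choose t : ℝ) * ‖lam‖ ^ (n - t) * (K * ‖N ^ t‖) := by
    intro n hn
    rw [add_comm (lam • P) N, hcomm.add_pow,
      ← Finset.sum_range_add_sum_Ico _ (show m ≤ n + 1 by omega)]
    have h2 : ∑ t ∈ Finset.Ico m (n + 1), N ^ t * (lam • P) ^ (n - t) * (n.choose t : A) = 0 := by
      refine Finset.sum_eq_zero fun t ht => ?_
      rw [hNt t (Finset.mem_Ico.mp ht).1, zero_mul, zero_mul]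
    rw [h2, add_zero]
    refine (norm_sum_le _ _).trans (Finset.sum_le_sum fun t ht => ?_)
    have he : N ^ t * (lam • P) ^ (n - t) * (n.choose t : A)
        = (n.choose t) • (lam ^ (n - t) • (N ^ t * P ^ (n - t))) := by
      rw [smul_pow, mul_smul_comm, smul_mul_assoc,
        ← (Nat.cast_commute (n.choose t) (N ^ t * P ^ (n - t))).eq, ← nsmul_eq_mul]
      exact smul_comm _ _ _
    rw [he]
    refine norm_nsmul_le.trans ?_
    rw [norm_smul, norm_pow, ← mul_assoc]
    refine mul_le_mul_of_nonneg_left ?_ (by positivity)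
    refine (norm_mul_le _ _).trans ?_
    rw [mul_comm K]
    exact mul_le_mul_of_nonneg_left (hPt _) (norm_nonneg _)
  have hterm : ∀ t : ℕ, Tendsto (fun n : ℕ => (n.choose t : ℝ) * ‖lam‖ ^ (n - t) * (K * ‖N ^ t‖))
      atTop (nhds 0) := by
    intro t
    by_cases hl : lam = 0
    · refine Tendsto.congr' ?_ (tendsto_const_nhds : Tendsto (fun _ : ℕ => (0:ℝ)) atTop (nhds 0))
      filter_upwards [eventually_ge_atTop (t + 1)] with n hn
      rw [hl, norm_zero, zero_pow (by omega : n - t ≠ 0), mul_zero, zero_mul]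
    · have hl0 : 0 < ‖lam‖ := norm_pos_iff.mpr hl
      have hsum : Summable fun n : ℕ => ‖(n : ℝ) ^ t * ‖lam‖ ^ n‖ :=
        summable_norm_pow_mul_geometric_of_norm_lt_one t
          (by rwa [Real.norm_eq_abs, abs_of_nonneg (norm_nonneg _)])
      have htend : Tendsto (fun n : ℕ => (n : ℝ) ^ t * ‖lam‖ ^ n) atTop (nhds 0) :=
        (hsum.of_norm).tendsto_atTop_zero
      have htend2 := htend.const_mul ((‖lam‖⁻¹ ^ t) * (K * ‖N ^ t‖))
      rw [mul_zero] at htend2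
      refine squeeze_zero' ?_ ?_ htend2
      · filter_upwards with n; positivity
      · filter_upwards [eventually_ge_atTop t] with n hn
        have h1 : (n.choose t : ℝ) ≤ (n : ℝ) ^ t := by exact_mod_cast Nat.choose_le_pow n t
        have h2 : ‖lam‖ ^ (n - t) = ‖lam‖ ^ n * (‖lam‖⁻¹) ^ t := by
          rw [inv_pow, pow_sub₀ _ (ne_of_gt hl0) hn]
        rw [h2]
        calc (n.choose t : ℝ) * (‖lam‖ ^ n * ‖lam‖⁻¹ ^ t) * (K * ‖N ^ t‖)
            ≤ (n : ℝ) ^ t * (‖lam‖ ^ n * ‖lam‖⁻¹ ^ t) * (K * ‖N ^ t‖) := by gcongr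
          _ = ‖lam‖⁻¹ ^ t * (K * ‖N ^ t‖) * ((n : ℝ) ^ t * ‖lam‖ ^ n) := by ring
  have hsumtend : Tendsto (fun n : ℕ => ∑ t ∈ range m,
      (n.choose t : ℝ) * ‖lam‖ ^ (n - t) * (K * ‖N ^ t‖)) atTop (nhds 0) := by
    have := tendsto_finset_sum (range m) (fun t _ => hterm t)
    simpa using this
  rw [tendsto_zero_iff_norm_tendsto_zero]
  refine squeeze_zero' ?_ ?_ hsumtend
  · filter_upwards with n; positivity
  · filter_upwards [eventually_ge_atTop m] with n hn
    exact hbound n hn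

lemma eig_le_one (T Q : A) (lam : ℂ) (C : ℝ) (hC : ∀ n : ℕ, ‖T ^ n‖ ≤ C)
    (hQ : Q ≠ 0) (hTQ : T * Q = lam • Q) : ‖lam‖ ≤ 1 := by
  have hpow : ∀ n : ℕ, T ^ n * Q = lam ^ n • Q := by
    intro n
    induction n with
    | zero => simp
    | succ n ih =>
      rw [pow_succ, mul_assoc, hTQ, mul_smul_comm, ih, smul_smul, pow_succ, mul_comm]
  by_contra h
  push_neg at h
  have hQpos : 0 < ‖Q‖ := norm_pos_iff.mpr hQ
  obtain ⟨n, hn⟩ := pow_unbounded_of_one_lt C h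
  have : ‖lam‖ ^ n * ‖Q‖ ≤ C * ‖Q‖ := by
    calc ‖lam‖ ^ n * ‖Q‖ = ‖lam ^ n • Q‖ := by rw [norm_smul, norm_pow]
      _ = ‖T ^ n * Q‖ := by rw [hpow]
      _ ≤ ‖T ^ n‖ * ‖Q‖ := norm_mul_le _ _
      _ ≤ C * ‖Q‖ := mul_le_mul_of_nonneg_right (hC n) (norm_nonneg _)
  have := le_of_mul_le_mul_right this hQpos
  linarith

end Aux2

section Main


theorem stmt4' {V : Type} [NormedAddCommGroup V] [NormedSpace ℂ V] [FiniteDimensional ℂ V]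
    (T : V →L[ℂ] V) (C : ℝ) (hC : ∀ n : ℕ, ‖T ^ n‖ ≤ C)
    {ι : Type} [Fintype ι] [DecidableEq ι]
    (lam : ι → ℂ) (P N : ι → (V →L[ℂ] V))
    (hinj : Function.Injective lam)
    (hT : T = ∑ i, (lam i • P i + N i))
    (hPP : ∀ i j, P i * P j = if i = j then P i else 0)
    (hsum : ∑ i, P i = 1)
    (hNP : ∀ i, N i * P i = N i)
    (hPN : ∀ i, P i * N i = N i)
    (hNnil : ∀ i, IsNilpotent (N i)) :
    ∀ k : ℕ, (∑ i ∈ Finset.univ.filter (fun i => ‖lam i‖ = 1), lam i • P i) ^ k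
      ∈ closure {A : V →L[ℂ] V | ∃ n : ℕ, A = T ^ n} := by
  classical
  intro k
  set B : ι → (V →L[ℂ] V) := fun i => lam i • P i + N i with hB
  have hT' : T = ∑ i, B i := by rw [hT]
  have hPP' : ∀ i, P i * P i = P i := fun i => by rw [hPP, if_pos rfl]
  have hPPo : ∀ i j, i ≠ j → P i * P j = 0 := fun i j h => by rw [hPP, if_neg h]
  have hPNo : ∀ i j, i ≠ j → P i * N j = 0 := fun i j h => by
    rw [← hPN j, ← mul_assoc, hPPo i j h, zero_mul]
  have hPB : ∀ i j, P i * B j = if i = j then B j else 0 := by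
    intro i j
    show P i * (lam j • P j + N j) = if i = j then (lam j • P j + N j) else 0
    by_cases h : i = j
    · subst h
      rw [if_pos rfl, mul_add, mul_smul_comm, hPP' i, hPN i]
    · rw [if_neg h, mul_add, mul_smul_comm, hPPo i j h, hPNo i j h, smul_zero, add_zero]
  have hNB : ∀ i j, i ≠ j → N i * B j = 0 := fun i j h => by
    have hp := hPB i j
    rw [if_neg h] at hp
    rw [← hNP i, mul_assoc, hp, mul_zero]
  have hBB : ∀ i j, i ≠ j → B i * B j = 0 := fun i j h => by
    have hp := hPB i j
    rw [if_neg h] at hp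
    show (lam i • P i + N i) * B j = 0
    rw [add_mul, smul_mul_assoc, hp, hNB i j h, smul_zero, add_zero]
  have hPBpow : ∀ i j (n : ℕ), 1 ≤ n → P i * B j ^ n = if i = j then B j ^ n else 0 := by
    intro i j n hn
    obtain ⟨n', rfl⟩ : ∃ n', n = n' + 1 := ⟨n - 1, by omega⟩
    rw [pow_succ', ← mul_assoc, hPB]
    by_cases h : i = j
    · rw [if_pos h, if_pos h, ← pow_succ']
    · rw [if_neg h, if_neg h, zero_mul]
  have hTn : ∀ n : ℕ, 1 ≤ n → T ^ n = ∑ i, B i ^ n := by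
    intro n hn
    induction n with
    | zero => omega
    | succ n ih =>
      rcases Nat.eq_zero_or_pos n with rfl | hn'
      · rw [pow_one, hT']
        exact Finset.sum_congr rfl fun i _ => (pow_one (B i)).symm
      · rw [pow_succ, ih hn', hT', Finset.sum_mul]
        refine Finset.sum_congr rfl fun i _ => ?_
        rw [Finset.mul_sum]
        rw [Finset.sum_eq_single i (fun j _ hj => ?_) (fun h => absurd (mem_univ i) h)]
        · rw [← pow_succ]
        · obtain ⟨n', rfl⟩ : ∃ n', n = n' + 1 := ⟨n - 1, by omega⟩
          rw [pow_succ, mul_assoc, hBB i j (Ne.symm hj), mul_zero]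
  have hPT : ∀ i (n : ℕ), 1 ≤ n → P i * T ^ n = B i ^ n := by
    intro i n hn
    rw [hTn n hn, Finset.mul_sum]
    rw [Finset.sum_eq_single i (fun j _ hj => ?_) (fun h => absurd (mem_univ i) h)]
    · rw [hPBpow i i n hn, if_pos rfl]
    · rw [hPBpow i j n hn, if_neg (Ne.symm hj)]
  have hBD : ∀ i (n : ℕ), 1 ≤ n → ‖B i ^ n‖ ≤ ‖P i‖ * C := by
    intro i n hn
    rw [← hPT i n hn]
    exact (norm_mul_le _ _).trans (mul_le_mul_of_nonneg_left (hC n) (norm_nonneg _))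
  have hle1 : ∀ i, P i ≠ 0 → ‖lam i‖ ≤ 1 := by
    intro i hPi
    obtain ⟨m, hm⟩ := hNnil i
    set s := Nat.findGreatest (fun t => N i ^ t * P i ≠ 0) m with hs
    have hs0 : N i ^ s * P i ≠ 0 :=
      Nat.findGreatest_spec (P := fun t => N i ^ t * P i ≠ 0) (Nat.zero_le m) (by simpa using hPi)
    have hsm : s ≤ m := Nat.findGreatest_le m
    have hs1 : N i ^ (s + 1) * P i = 0 := by
      rcases Nat.lt_or_ge m (s + 1) with h | h
      · have hsm' : s = m := by omega
        rw [hsm', pow_succ, hm, zero_mul, zero_mul]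
      · by_contra hne
        exact (Nat.findGreatest_is_greatest (by omega : s < s + 1) h) hne
    set Q := N i ^ s * P i with hQdef
    have hPQ : ∀ j, P j * Q = if j = i then Q else 0 := by
      intro j
      by_cases h : j = i
      · subst h
        rw [if_pos rfl, hQdef]
        cases s with
        | zero => rw [pow_zero, one_mul, hPP' j]
        | succ t =>
          rw [← mul_assoc, PmulnAux (hPN j) (t + 1) (by omega)]
      · rw [if_neg h, hQdef]
        cases s with
        | zero => rw [pow_zero, one_mul, hPPo j i h]
        | succ t =>
          rw [pow_succ', ← mul_assoc, ← mul_assoc, hPNo j i h, zero_mul, zero_mul]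
    have hNQ : ∀ j, N j * Q = 0 := by
      intro j
      rw [← hNP j, mul_assoc, hPQ j]
      by_cases h : j = i
      · rw [if_pos h, h, hQdef, ← mul_assoc, ← pow_succ', hs1]
      · rw [if_neg h, mul_zero]
    have hTQ : T * Q = lam i • Q := by
      rw [hT', Finset.sum_mul]
      have hterm : ∀ j, B j * Q = if j = i then lam i • Q else 0 := by
        intro j
        show (lam j • P j + N j) * Q = _
        rw [add_mul, smul_mul_assoc, hPQ j, hNQ j, add_zero]
        by_cases h : j = i
        · rw [if_pos h, if_pos h, h]
        · rw [if_neg h, if_neg h, smul_zero]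
      rw [Finset.sum_congr rfl (fun j _ => hterm j),
        Finset.sum_ite_eq' Finset.univ i (fun _ => lam i • Q), if_pos (mem_univ i)]
    exact eig_le_one T Q (lam i) C hC hs0 hTQ
  have hNzero : ∀ i, ‖lam i‖ = 1 → N i = 0 := fun i h1 =>
    block_nilp_zero (P i) (N i) (lam i) (‖P i‖ * C) (hPP' i) (hPN i) (hNP i) h1
      (fun n hn => hBD i n hn) (hNnil i)
  have hBuni : ∀ i, ‖lam i‖ = 1 → ∀ n : ℕ, 1 ≤ n → B i ^ n = lam i ^ n • P i := by
    intro i h1 n hn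
    have hbi : B i = lam i • P i := by
      show lam i • P i + N i = lam i • P i
      rw [hNzero i h1, add_zero]
    rw [hbi, smul_pow, powIdem (hPP' i) n hn]
  have hBdecay : ∀ i, ¬(‖lam i‖ = 1) → Tendsto (fun n : ℕ => B i ^ n) atTop (nhds 0) := by
    intro i h1
    by_cases hPi : P i = 0
    · have hNi : N i = 0 := by rw [← hNP i, hPi, mul_zero]
      have hBi : B i = 0 := by
        show lam i • P i + N i = 0
        rw [hPi, hNi, smul_zero, add_zero]
      refine Tendsto.congr' ?_
        (tendsto_const_nhds : Tendsto (fun _ : ℕ => (0 : V →L[ℂ] V)) atTop (nhds 0))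
      filter_upwards [eventually_ge_atTop 1] with n hn
      rw [hBi, zero_pow (by omega : n ≠ 0)]
    · have hlt : ‖lam i‖ < 1 := lt_of_le_of_ne (hle1 i hPi) h1
      exact block_decay (P i) (N i) (lam i) (hPP' i) (hPN i) (hNP i) hlt (hNnil i)
  set F := Finset.univ.filter (fun i => ‖lam i‖ = 1) with hF
  have hmemF : ∀ i, i ∈ F ↔ ‖lam i‖ = 1 := by
    intro i
    rw [hF, Finset.mem_filter]
    simp
  have hTinfpow : ∀ k : ℕ, 1 ≤ k →
      (∑ i ∈ F, lam i • P i) ^ k = ∑ i ∈ F, lam i ^ k • P i := by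
    intro k hk
    induction k with
    | zero => omega
    | succ k ih =>
      rcases Nat.eq_zero_or_pos k with rfl | hk'
      · rw [pow_one]
        exact Finset.sum_congr rfl fun i _ => by rw [pow_one]
      · rw [pow_succ, ih hk', Finset.sum_mul]
        refine Finset.sum_congr rfl fun i hi => ?_
        rw [Finset.mul_sum]
        have hterm : ∀ j, lam i ^ k • P i * (lam j • P j)
            = if j = i then lam i ^ (k + 1) • P i else 0 := by
          intro j
          rw [smul_mul_assoc, mul_smul_comm, smul_smul]
          by_cases h : j = i
          · rw [if_pos h, h, hPP' i, ← pow_succ]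
          · rw [if_neg h, hPPo i j (fun he => h he.symm), smul_zero]
        rw [Finset.sum_congr rfl (fun j _ => hterm j),
          Finset.sum_ite_eq' F i (fun _ => lam i ^ (k + 1) • P i), if_pos hi]
  have hrec : ∀ ε : ℝ, 0 < ε → ∀ M : ℕ, ∃ d : ℕ, M ≤ d ∧ ∀ i ∈ F, ‖lam i ^ d - 1‖ < ε := by
    intro ε hε M
    set x : ℕ → ι → ℂ := fun n i => if ‖lam i‖ = 1 then lam i ^ n else 0 with hx
    have hxball : ∀ n, x n ∈ Metric.closedBall (0 : ι → ℂ) 1 := by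
      intro n
      rw [Metric.mem_closedBall, dist_zero_right]
      refine (pi_norm_le_iff_of_nonneg zero_le_one).mpr fun i => ?_
      simp only [hx]
      split
      · rename_i h; rw [norm_pow, h, one_pow]
      · rw [norm_zero]; exact zero_le_one
    obtain ⟨a, -, φ, hφ, hconv⟩ := (isCompact_closedBall (0 : ι → ℂ) 1).tendsto_subseq hxball
    obtain ⟨L, hL⟩ := Metric.tendsto_atTop.mp hconv (ε / 2) (by positivity)
    have hφq : φ L + M ≤ φ (L + φ L + M) :=
      le_trans (by omega) hφ.le_apply
    refine ⟨φ (L + φ L + M) - φ L, le_tsub_of_add_le_left hφq, ?_⟩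
    intro i hi
    have hi1 : ‖lam i‖ = 1 := (hmemF i).mp hi
    have e1 : dist (x (φ (L + φ L + M))) a < ε / 2 := hL _ (by omega)
    have e2 : dist (x (φ L)) a < ε / 2 := hL L le_rfl
    have hcomp : dist (x (φ (L + φ L + M)) i) (x (φ L) i) < ε :=
      calc dist (x (φ (L + φ L + M)) i) (x (φ L) i)
          ≤ dist (x (φ (L + φ L + M))) (x (φ L)) := dist_le_pi_dist _ _ i
        _ ≤ dist (x (φ (L + φ L + M))) a + dist a (x (φ L)) := dist_triangle _ _ _
        _ < ε / 2 + ε / 2 := by rw [dist_comm a]; exact add_lt_add e1 e2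
        _ = ε := by ring
    have hxq : x (φ (L + φ L + M)) i = lam i ^ (φ (L + φ L + M)) := by
      simp only [hx, if_pos hi1]
    have hxL : x (φ L) i = lam i ^ (φ L) := by
      simp only [hx, if_pos hi1]
    rw [hxq, hxL, dist_eq_norm] at hcomp
    have hfactor : lam i ^ (φ (L + φ L + M)) - lam i ^ (φ L)
        = lam i ^ (φ L) * (lam i ^ (φ (L + φ L + M) - φ L) - 1) := by
      rw [mul_sub, mul_one, ← pow_add,
        Nat.add_sub_cancel' (le_trans (by omega : φ L ≤ φ L + M) hφq)]
    rw [hfactor, norm_mul, norm_pow, hi1, one_pow, one_mul] at hcomp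
    exact hcomp
  rcases Nat.eq_zero_or_pos k with rfl | hk
  · exact subset_closure ⟨0, by rw [pow_zero, pow_zero]⟩
  · rw [Metric.mem_closure_iff]
    intro ε hε
    have hdec : Tendsto (fun n : ℕ => ∑ i ∈ Fᶜ, B i ^ n) atTop (nhds 0) := by
      have h := tendsto_finset_sum (Fᶜ) (fun i (hi : i ∈ Fᶜ) =>
        hBdecay i (fun h1 => (Finset.mem_compl.mp hi) ((hmemF i).mpr h1)))
      simpa using h
    obtain ⟨M, hM⟩ := Metric.tendsto_atTop.mp hdec (ε / 2) (by positivity)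
    set c : ℝ := ∑ i ∈ F, ‖P i‖ with hc
    have hc0 : 0 ≤ c := Finset.sum_nonneg fun i _ => norm_nonneg _
    obtain ⟨d, hdM, hd⟩ := hrec (ε / (2 * (c + 1))) (div_pos hε (by linarith)) M
    refine ⟨T ^ (k + d), ⟨k + d, rfl⟩, ?_⟩
    have hn1 : 1 ≤ k + d := by omega
    rw [dist_eq_norm]
    have hsplit : T ^ (k + d) = ∑ i ∈ F, lam i ^ (k + d) • P i + ∑ i ∈ Fᶜ, B i ^ (k + d) := by
      rw [hTn _ hn1, ← Finset.sum_add_sum_compl F]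
      congr 1
      exact Finset.sum_congr rfl fun i hi => hBuni i ((hmemF i).mp hi) _ hn1
    rw [hTinfpow k hk, hsplit]
    have hre : (∑ i ∈ F, lam i ^ k • P i)
        - (∑ i ∈ F, lam i ^ (k + d) • P i + ∑ i ∈ Fᶜ, B i ^ (k + d))
        = (∑ i ∈ F, (lam i ^ k * (1 - lam i ^ d)) • P i) - ∑ i ∈ Fᶜ, B i ^ (k + d) := by
      rw [sub_add_eq_sub_sub, ← Finset.sum_sub_distrib]
      congr 1
      refine Finset.sum_congr rfl fun i hi => ?_
      rw [← sub_smul, mul_sub, mul_one, ← pow_add]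
    rw [hre]
    have h1 : ‖∑ i ∈ F, (lam i ^ k * (1 - lam i ^ d)) • P i‖ ≤ ε / 2 := by
      refine (norm_sum_le _ _).trans ?_
      have hb : ∀ i ∈ F, ‖(lam i ^ k * (1 - lam i ^ d)) • P i‖
          ≤ (ε / (2 * (c + 1))) * ‖P i‖ := by
        intro i hi
        rw [norm_smul (lam i ^ k * (1 - lam i ^ d)) (P i), norm_mul, norm_pow, (hmemF i).mp hi, one_pow, one_mul]
        exact mul_le_mul_of_nonneg_right (by rw [norm_sub_rev]; exact (hd i hi).le)
          (norm_nonneg _)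
      refine (Finset.sum_le_sum hb).trans ?_
      rw [← Finset.mul_sum, ← hc]
      calc (ε / (2 * (c + 1))) * c ≤ (ε / (2 * (c + 1))) * (c + 1) :=
            mul_le_mul_of_nonneg_left (by linarith) (by positivity)
        _ = ε / 2 := by
            field_simp
    have h2 : ‖∑ i ∈ Fᶜ, B i ^ (k + d)‖ < ε / 2 := by
      have hh := hM (k + d) (by omega)
      rwa [dist_zero_right] at hh
    calc ‖(∑ i ∈ F, (lam i ^ k * (1 - lam i ^ d)) • P i) - ∑ i ∈ Fᶜ, B i ^ (k + d)‖
        ≤ ‖∑ i ∈ F, (lam i ^ k * (1 - lam i ^ d)) • P i‖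
          + ‖∑ i ∈ Fᶜ, B i ^ (k + d)‖ := norm_sub_le _ _
      _ < ε / 2 + ε / 2 := add_lt_add_of_le_of_lt h1 h2
      _ = ε := by ring


end Main

/-- For a power-bounded operator `T` and its asymptotic part `T_∞`, every power `T_∞^k`
lies in the closure of the set `{T^n : n ∈ ℕ}`. -/
theorem stmt4 {V : Type} [NormedAddCommGroup V] [NormedSpace ℂ V] [FiniteDimensional ℂ V]
    (T : V →L[ℂ] V) (C : ℝ) (hC : ∀ n : ℕ, ‖T ^ n‖ ≤ C)
    {ι : Type} [Fintype ι] [DecidableEq ι]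
    (lam : ι → ℂ) (P N : ι → (V →L[ℂ] V))
    (hinj : Function.Injective lam)
    (hT : T = ∑ i, (lam i • P i + N i))
    (hPP : ∀ i j, P i * P j = if i = j then P i else 0)
    (hsum : ∑ i, P i = 1)
    (hNP : ∀ i, N i * P i = N i)
    (hPN : ∀ i, P i * N i = N i)
    (hNnil : ∀ i, IsNilpotent (N i)) :
    ∀ k : ℕ, (asymptoticPart lam P) ^ k ∈ closure {A : V →L[ℂ] V | ∃ n : ℕ, A = T ^ n} :=
  stmt4' T C hC lam P N hinj hT hPP hsum hNP hPN hNnil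
end Aux
end

section
/- Let T be a power-bounded operator on a finite-dimensional inner product space with ‖T^n‖_∞ ≤ C for all n, let T_∞ be its asymptotic part, and let μ < 1 be the spectral radius of T − T_∞, D the dimension. Then for all n ∈ ℕ, ‖T^n − T_∞^n‖_∞ ≤ 2 μ^{n−D+1} n^{D−1} (μ + 2C)^{D−1}. -/
open Finset

open Polynomial
open scoped ENNReal NNReal
set_option maxHeartbeats 1600000

lemma hockey (n k : ℕ) : ∑ m ∈ Finset.range n, (m.choose k) = n.choose (k+1) := by
  induction n with
  | zero => simp
  | succ n ih => rw [Finset.sum_range_succ, ih]; simp [Nat.choose_succ_succ, Nat.add_comm]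

lemma sum_pow_le {n : ℕ} (hn : 2 ≤ n) (D : ℕ) :
    (∑ k ∈ Finset.range D, n ^ k) ≤ 2 * n ^ (D - 1) := by
  induction D with
  | zero => simp
  | succ d ih =>
    rcases Nat.eq_zero_or_pos d with h | h
    · subst h; simp
    · rw [Finset.sum_range_succ]
      have h1 : 2 * n ^ (d-1) ≤ n ^ d := by
        calc 2 * n ^ (d-1) ≤ n * n ^ (d-1) := by
              exact Nat.mul_le_mul_right _ hn
          _ = n ^ (d - 1 + 1) := by ring
          _ = n ^ d := by rw [Nat.sub_add_cancel h]
      have : d + 1 - 1 = d := rfl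
      rw [this]
      calc (∑ k ∈ Finset.range d, n ^ k) + n ^ d ≤ 2 * n ^ (d-1) + n ^ d := by omega
        _ ≤ n ^ d + n ^ d := by omega
        _ = 2 * n ^ d := by ring

lemma sum_choose_le (D : ℕ) {n : ℕ} (hn : 1 ≤ n) :
    (∑ k ∈ Finset.range D, (n.choose k)) ≤ 2 * n ^ (D - 1) := by
  rcases eq_or_lt_of_le hn with h | h
  · -- n = 1
    subst_eqs
    have h2 : ∑ k ∈ Finset.range D, Nat.choose 1 k ≤ ∑ k ∈ Finset.range (max D 2), Nat.choose 1 k :=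
      Finset.sum_le_sum_of_subset (by simp [Finset.range_subset_range])
    have h3 : ∑ k ∈ Finset.range (max D 2), Nat.choose 1 k = ∑ k ∈ Finset.range 2, Nat.choose 1 k := by
      refine (Finset.sum_subset (by simp [Finset.range_subset_range]) ?_).symm
      intro x _ hx
      simp only [Finset.mem_range, not_lt] at hx
      exact Nat.choose_eq_zero_of_lt (by omega)
    simp only [one_pow]
    calc ∑ k ∈ Finset.range D, Nat.choose 1 k ≤ _ := h2
      _ = _ := h3
      _ ≤ 2 := by decide
  · have h2 : 2 ≤ n := h
    calc (∑ k ∈ Finset.range D, (n.choose k)) ≤ ∑ k ∈ Finset.range D, n ^ k :=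
          Finset.sum_le_sum fun k _ => Nat.choose_le_pow _ _
      _ ≤ 2 * n ^ (D-1) := sum_pow_le h2 D
lemma pow_mul_expand {A : Type*} [NormedRing A] [NormedAlgebra ℂ A]
    (S X : A) (z : ℂ) (n : ℕ) :
    S ^ n * X = z ^ n • X + ∑ m ∈ Finset.range n, z ^ (n - 1 - m) • (S ^ m * ((S - z • 1) * X)) := by
  induction n with
  | zero => simp
  | succ n ih =>
    have : S ^ (n+1) * X = S * (S ^ n * X) := by rw [pow_succ']; rw [mul_assoc]
    rw [this, ih]
    rw [Finset.sum_range_succ' (fun m => z ^ (n + 1 - 1 - m) • (S ^ m * ((S - z • 1) * X)))]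
    have hSX : S * (z ^ n • X) = z ^ (n+1) • X + z ^ n • ((S - z • 1) * X) := by
      rw [mul_smul_comm, sub_mul, smul_sub, smul_mul_assoc, one_mul, pow_succ']
      rw [mul_comm z (z ^ n), smul_smul]
      abel
    rw [mul_add, hSX, Finset.mul_sum]
    have hterm : ∀ m ∈ Finset.range n,
        S * (z ^ (n - 1 - m) • (S ^ m * ((S - z • 1) * X)))
          = z ^ (n + 1 - 1 - (m+1)) • (S ^ (m+1) * ((S - z • 1) * X)) := by
      intro m hm
      rw [mul_smul_comm]
      congr 1
      · congr 1; omega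
      · rw [← mul_assoc, ← pow_succ']
    rw [Finset.sum_congr rfl hterm]
    simp only [pow_zero, one_mul, Nat.add_sub_cancel, Nat.sub_zero]
    abel

lemma key_bound {A : Type*} [NormedRing A] [NormedAlgebra ℂ A]
    (S : A) (μ B : ℝ) (hμ0 : 0 < μ) :
    ∀ (ℓ : List ℂ), (∀ z ∈ ℓ, ‖z‖ ≤ μ) → (∀ z ∈ ℓ, ‖S - z • 1‖ ≤ B) →
    ∀ X : A, ((ℓ.map fun z => S - z • (1:A)).prod) * X = 0 →
    ∀ n : ℕ, ‖S ^ n * X‖ ≤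
      (∑ k ∈ Finset.range ℓ.length, (n.choose k : ℝ) * μ ^ ((n:ℤ) - k) * B ^ k) * ‖X‖ := by
  intro ℓ
  induction ℓ with
  | nil =>
    intro _ _ X hX n
    simp only [List.map_nil, List.prod_nil, one_mul] at hX
    simp [hX]
  | cons z ℓ ih =>
    intro hz hB X hX n
    have hzμ : ‖z‖ ≤ μ := hz z List.mem_cons_self
    have hBz : ‖S - z • 1‖ ≤ B := hB z List.mem_cons_self
    have hB0 : (0:ℝ) ≤ B := le_trans (norm_nonneg _) hBz
    have hX' : ((ℓ.map fun w => S - w • (1:A)).prod) * ((S - z • 1) * X) = 0 := by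
      have hcomm : ∀ w : ℂ, Commute (S - z • (1:A)) (S - w • (1:A)) := by
        intro w
        have h1 : Commute S (w • (1:A)) := (Commute.one_right S).smul_right w
        have h2 : Commute (z • (1:A)) S := (Commute.one_left S).smul_left z
        have h3 : Commute (z • (1:A)) (w • (1:A)) :=
          ((Commute.refl (1:A)).smul_left z).smul_right w
        exact ((Commute.refl S).sub_right h1).sub_left (h2.sub_right h3)
      have hc : Commute (S - z • (1:A)) ((ℓ.map fun w => S - w • (1:A)).prod) := by
        apply Commute.list_prod_right
        intro y hy
        obtain ⟨w, _, rfl⟩ := List.mem_map.mp hy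
        exact hcomm w
      calc ((ℓ.map fun w => S - w • (1:A)).prod) * ((S - z • 1) * X)
          = (((ℓ.map fun w => S - w • (1:A)).prod) * (S - z • 1)) * X := by rw [mul_assoc]
        _ = ((S - z • 1) * ((ℓ.map fun w => S - w • (1:A)).prod)) * X := by rw [← hc.eq]
        _ = (((z :: ℓ).map fun w => S - w • (1:A)).prod) * X := by
            rw [List.map_cons, List.prod_cons]
        _ = 0 := hX
    have IH := ih (fun w hw => hz w (List.mem_cons_of_mem z hw))
      (fun w hw => hB w (List.mem_cons_of_mem z hw)) ((S - z • 1) * X) hX'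
    set d := ℓ.length with hd
    set X' := (S - z • 1) * X with hX'def
    have hXnorm : ‖X'‖ ≤ B * ‖X‖ :=
      le_trans (norm_mul_le _ _) (mul_le_mul_of_nonneg_right hBz (norm_nonneg _))
    have hSd_nonneg : ∀ m : ℕ, 0 ≤ ∑ k ∈ Finset.range d, (m.choose k : ℝ) * μ ^ ((m:ℤ) - k) * B ^ k := by
      intro m
      apply Finset.sum_nonneg
      intro k _
      have := zpow_pos hμ0 ((m:ℤ) - k)
      positivity
    -- main norm chain
    rw [pow_mul_expand S X z n]
    have step1 : ‖z ^ n • X + ∑ m ∈ Finset.range n, z ^ (n - 1 - m) • (S ^ m * X')‖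
        ≤ μ ^ n * ‖X‖ + ∑ m ∈ Finset.range n,
            μ ^ (n - 1 - m) * ((∑ k ∈ Finset.range d, (m.choose k : ℝ) * μ ^ ((m:ℤ) - k) * B ^ k) * (B * ‖X‖)) := by
      refine le_trans (norm_add_le _ _) (add_le_add ?_ ?_)
      · rw [norm_smul, norm_pow]
        exact mul_le_mul_of_nonneg_right (pow_le_pow_left₀ (norm_nonneg z) hzμ n) (norm_nonneg _)
      · refine le_trans (norm_sum_le _ _) (Finset.sum_le_sum ?_)
        intro m _
        rw [norm_smul, norm_pow]
        have h1 : ‖z‖ ^ (n-1-m) ≤ μ ^ (n-1-m) := pow_le_pow_left₀ (norm_nonneg z) hzμ _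
        have h2 : ‖S ^ m * X'‖ ≤ (∑ k ∈ Finset.range d, (m.choose k : ℝ) * μ ^ ((m:ℤ) - k) * B ^ k) * (B * ‖X‖) := by
          refine le_trans (IH m) ?_
          exact mul_le_mul_of_nonneg_left hXnorm (hSd_nonneg m)
        calc ‖z‖ ^ (n-1-m) * ‖S ^ m * X'‖
            ≤ μ ^ (n-1-m) * ‖S ^ m * X'‖ :=
              mul_le_mul_of_nonneg_right h1 (norm_nonneg _)
          _ ≤ μ ^ (n-1-m) * ((∑ k ∈ Finset.range d, (m.choose k : ℝ) * μ ^ ((m:ℤ) - k) * B ^ k) * (B * ‖X‖)) :=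
              mul_le_mul_of_nonneg_left h2 (by positivity)
    refine le_trans step1 (le_of_eq ?_)
    -- scalar identity
    have inner : ∀ k : ℕ, ∑ m ∈ Finset.range n, (m.choose k : ℝ) * (μ ^ (n-1-m) * μ ^ ((m:ℤ)-k))
        = (n.choose (k+1) : ℝ) * μ ^ ((n:ℤ)-1-k) := by
      intro k
      have hterm : ∀ m ∈ Finset.range n, (m.choose k : ℝ) * (μ ^ (n-1-m) * μ ^ ((m:ℤ)-k))
          = (m.choose k : ℝ) * μ ^ ((n:ℤ)-1-k) := by
        intro m hm
        have hm' : m < n := Finset.mem_range.mp hm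
        congr 1
        rw [← zpow_natCast μ (n-1-m), ← zpow_add₀ hμ0.ne']
        congr 1
        omega
      rw [Finset.sum_congr rfl hterm, ← Finset.sum_mul]
      congr 1
      rw [← Nat.cast_sum, hockey]
    have expand : (∑ k ∈ Finset.range (z :: ℓ).length, (n.choose k : ℝ) * μ ^ ((n:ℤ) - k) * B ^ k) * ‖X‖
        = (μ ^ ((n:ℤ)) + ∑ k ∈ Finset.range d, (n.choose (k+1) : ℝ) * μ ^ ((n:ℤ)-1-k) * B ^ (k+1)) * ‖X‖ := by
      congr 1
      rw [List.length_cons,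
        Finset.sum_range_succ' (fun k => (n.choose k : ℝ) * μ ^ ((n:ℤ) - k) * B ^ k)]
      have : ∀ k ∈ Finset.range d, (n.choose (k+1) : ℝ) * μ ^ ((n:ℤ) - (k+1:ℕ)) * B ^ (k+1)
          = (n.choose (k+1) : ℝ) * μ ^ ((n:ℤ)-1-k) * B ^ (k+1) := by
        intro k _
        congr 2
        · push_cast; ring_nf
      rw [Finset.sum_congr rfl this]
      simp [add_comm]
    rw [expand]
    rw [add_mul, ← zpow_natCast μ n]
    congr 1
    -- remaining: double sum equality
    have lhs_eq : ∑ m ∈ Finset.range n,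
        μ ^ (n - 1 - m) * ((∑ k ∈ Finset.range d, (m.choose k : ℝ) * μ ^ ((m:ℤ) - k) * B ^ k) * (B * ‖X‖))
        = ∑ k ∈ Finset.range d, (∑ m ∈ Finset.range n, (m.choose k : ℝ) * (μ ^ (n-1-m) * μ ^ ((m:ℤ)-k))) * (B ^ (k+1) * ‖X‖) := by
      have hrow : ∀ m ∈ Finset.range n,
          μ ^ (n - 1 - m) * ((∑ k ∈ Finset.range d, (m.choose k : ℝ) * μ ^ ((m:ℤ) - k) * B ^ k) * (B * ‖X‖))
          = ∑ k ∈ Finset.range d, ((m.choose k : ℝ) * (μ ^ (n-1-m) * μ ^ ((m:ℤ)-k))) * (B ^ (k+1) * ‖X‖) := by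
        intro m _
        rw [Finset.sum_mul, Finset.mul_sum]
        refine Finset.sum_congr rfl fun k _ => ?_
        ring
      rw [Finset.sum_congr rfl hrow, Finset.sum_comm]
      refine Finset.sum_congr rfl fun k _ => ?_
      rw [Finset.sum_mul]
    rw [lhs_eq, Finset.sum_mul]
    refine Finset.sum_congr rfl fun k _ => ?_
    rw [inner k]
    ring
lemma annihilating_list {V : Type} [NormedAddCommGroup V] [NormedSpace ℂ V]
    [FiniteDimensional ℂ V] (S : V →L[ℂ] V) :
    ∃ ℓ : List ℂ, ℓ.length ≤ Module.finrank ℂ V ∧ (∀ z ∈ ℓ, z ∈ spectrum ℂ S) ∧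
      ((ℓ.map fun z => S - z • (1 : V →L[ℂ] V)).prod) = 0 := by
  set f : Module.End ℂ V := (S : V →ₗ[ℂ] V) with hf
  have hint : IsIntegral ℂ f := ⟨f.charpoly, f.charpoly_monic, f.aeval_self_charpoly⟩
  set q := minpoly ℂ f with hq
  have hmon : q.Monic := minpoly.monic hint
  have hsplit : q.Splits := IsAlgClosed.splits q
  have hprod : q = (q.roots.map fun a => X - C a).prod :=
    hsplit.eq_prod_roots_of_monic hmon
  have hcard : q.roots.card = q.natDegree := (splits_iff_card_roots).mp hsplit
  have hdeg : q.natDegree ≤ Module.finrank ℂ V := by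
    have hdvd : q ∣ f.charpoly := minpoly.dvd ℂ f f.aeval_self_charpoly
    have := Polynomial.natDegree_le_of_dvd hdvd f.charpoly_monic.ne_zero
    rwa [f.charpoly_natDegree] at this
  refine ⟨q.roots.toList, ?_, ?_, ?_⟩
  · rw [Multiset.length_toList, hcard]; exact hdeg
  · intro z hz
    have hz' : z ∈ q.roots := by rwa [← Multiset.mem_toList]
    have hroot : q.IsRoot z := isRoot_of_mem_roots hz'
    have hev : f.HasEigenvalue z := Module.End.hasEigenvalue_of_isRoot hroot
    obtain ⟨v, hv⟩ := hev.exists_hasEigenvector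
    rw [spectrum.mem_iff]
    intro hunit
    obtain ⟨w, hw⟩ := hunit.exists_left_inv
    have h0 : (algebraMap ℂ (V →L[ℂ] V) z - S) v = 0 := by
      rw [ContinuousLinearMap.sub_apply, Algebra.algebraMap_eq_smul_one,
        ContinuousLinearMap.smul_apply, ContinuousLinearMap.one_apply]
      have : S v = z • v := hv.apply_eq_smul
      rw [this, sub_self]
    have : v = 0 := by
      have := congrArg (fun g : V →L[ℂ] V => g v) hw
      simp only [ContinuousLinearMap.mul_apply, ContinuousLinearMap.one_apply] at this
      rw [h0, map_zero] at this
      exact this.symm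
    exact hv.right this
  · -- product of (S - z•1) over roots is zero
    have hprodlist : q = ((q.roots.toList).map fun a => X - C a).prod := by
      conv_lhs => rw [hprod]
      rw [← Multiset.coe_toList q.roots, Multiset.map_coe, Multiset.prod_coe,
        Multiset.coe_toList]
    let φ : (V →L[ℂ] V) →+* (V →ₗ[ℂ] V) :=
      { toFun := fun g => (g : V →ₗ[ℂ] V),
        map_one' := rfl, map_mul' := fun _ _ => rfl,
        map_zero' := rfl, map_add' := fun _ _ => rfl }
    have hinj : Function.Injective φ := fun a b h => ContinuousLinearMap.coe_injective h
    apply hinj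
    rw [map_list_prod, map_zero, List.map_map]
    have haeval : Polynomial.aeval f q = 0 := minpoly.aeval ℂ f
    rw [hprodlist, ← List.prod_map_hom] at haeval
    have hfun : ∀ z : ℂ, Polynomial.aeval f (X - C z) = φ (S - z • 1) := by
      intro z
      simp [Algebra.algebraMap_eq_smul_one]
      rfl
    have : List.map ((Polynomial.aeval f) ∘ fun a => X - C a) q.roots.toList
        = List.map (⇑φ ∘ fun z => S - z • 1) q.roots.toList := by
      refine List.map_congr_left fun z _ => ?_
      simp only [Function.comp_apply]
      exact hfun z
    rw [this] at haeval
    exact haeval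


/-- Schur-decomposition convergence bound: for a power-bounded operator `T` on a
`D`-dimensional inner product space with asymptotic part `T_∞` and spectral radius
`μ < 1` of `T - T_∞`, one has
`‖T^n - T_∞^n‖ ≤ 2 μ^(n-D+1) n^(D-1) (μ + 2C)^(D-1)` for all `n`. -/
theorem stmt6 {V : Type} [NormedAddCommGroup V] [InnerProductSpace ℂ V]
    [FiniteDimensional ℂ V]
    (D : ℕ) (hD : Module.finrank ℂ V = D)
    (T : V →L[ℂ] V) (C : ℝ) (hC : ∀ n : ℕ, ‖T ^ n‖ ≤ C)
    {ι : Type} [Fintype ι] [DecidableEq ι]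
    (lam : ι → ℂ) (P N : ι → (V →L[ℂ] V))
    (hinj : Function.Injective lam)
    (hT : T = ∑ i, (lam i • P i + N i))
    (hPP : ∀ i j, P i * P j = if i = j then P i else 0)
    (hsum : ∑ i, P i = 1)
    (hNP : ∀ i, N i * P i = N i)
    (hPN : ∀ i, P i * N i = N i)
    (hNnil : ∀ i, IsNilpotent (N i))
    (μ : ℝ) (hμ0 : 0 < μ) (hμ1 : μ < 1)
    (hμ : spectralRadius ℂ (T - asymptoticPart lam P) = ENNReal.ofReal μ) :
    ∀ n : ℕ, ‖T ^ n - (asymptoticPart lam P) ^ n‖ ≤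
      2 * μ ^ ((n : ℤ) - D + 1) * (n : ℝ) ^ (D - 1) * (μ + 2 * C) ^ (D - 1) := by
  -- notation
  set u : Finset ι := Finset.univ.filter (fun i => ‖lam i‖ = 1) with hu
  set Tinf : V →L[ℂ] V := asymptoticPart lam P with hTinf
  set S : V →L[ℂ] V := T - asymptoticPart lam P with hS
  -- nontriviality
  have hnt : Nontrivial V := by
    rcases subsingleton_or_nontrivial V with h | h
    · exfalso
      have h0 : spectralRadius ℂ S = 0 := spectrum.SpectralRadius.of_subsingleton S
      rw [hμ] at h0
      exact absurd h0 (ne_of_gt (ENNReal.ofReal_pos.mpr hμ0))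
    · exact h
  have hD1 : 1 ≤ D := hD ▸ Module.finrank_pos
  have hone : ‖(1 : V →L[ℂ] V)‖ = 1 := by
    rw [ContinuousLinearMap.one_def, ContinuousLinearMap.norm_id]
  have hC0 : (0 : ℝ) ≤ C := le_trans (norm_nonneg _) (hC 0)
  -- basic products
  have hPP0 : ∀ i j, i ≠ j → P i * P j = 0 := fun i j h => by rw [hPP]; simp [h]
  have hNP0 : ∀ i j, i ≠ j → N i * P j = 0 := by
    intro i j h
    calc N i * P j = (N i * P i) * P j := by rw [hNP]
      _ = N i * (P i * P j) := mul_assoc _ _ _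
      _ = 0 := by rw [hPP0 i j h, mul_zero]
  have hPN0 : ∀ i j, i ≠ j → P i * N j = 0 := by
    intro i j h
    calc P i * N j = P i * (P j * N j) := by rw [hPN]
      _ = (P i * P j) * N j := (mul_assoc _ _ _).symm
      _ = 0 := by rw [hPP0 i j h, zero_mul]
  have hTP : ∀ j, T * P j = lam j • P j + N j := by
    intro j
    rw [hT, Finset.sum_mul]
    rw [Finset.sum_eq_single j]
    · rw [add_mul, smul_mul_assoc, hPP, if_pos rfl, hNP]
    · intro i _ hij
      rw [add_mul, smul_mul_assoc, hPP, if_neg hij, smul_zero, hNP0 i j hij, add_zero]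
    · intro h; exact absurd (Finset.mem_univ j) h
  -- N i = 0 for unimodular eigenvalues
  have hNu : ∀ i, ‖lam i‖ = 1 → N i = 0 := by
    intro i hi
    have down : ∀ k : ℕ, N i ^ (k+2) = 0 → N i ^ (k+1) = 0 := by
      intro k hk
      have hPNk : ∀ j : ℕ, P i * N i ^ (j+1) = N i ^ (j+1) := by
        intro j
        rw [pow_succ', ← mul_assoc, hPN]
      have hTNk : T * N i ^ (k+1) = lam i • N i ^ (k+1) := by
        calc T * N i ^ (k+1) = T * (P i * N i ^ (k+1)) := by rw [hPNk]
          _ = (T * P i) * N i ^ (k+1) := by rw [mul_assoc]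
          _ = (lam i • P i + N i) * N i ^ (k+1) := by rw [hTP]
          _ = lam i • (P i * N i ^ (k+1)) + N i * N i ^ (k+1) := by
              rw [add_mul, smul_mul_assoc]
          _ = lam i • N i ^ (k+1) + N i ^ (k+2) := by rw [hPNk, ← pow_succ']
          _ = lam i • N i ^ (k+1) := by rw [hk, add_zero]
      set G : V →L[ℂ] V := P i * N i ^ k with hG
      have hTG : T * G = lam i • G + N i ^ (k+1) := by
        calc T * (P i * N i ^ k) = (T * P i) * N i ^ k := by rw [mul_assoc]
          _ = (lam i • P i + N i) * N i ^ k := by rw [hTP]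
          _ = lam i • (P i * N i ^ k) + N i * N i ^ k := by rw [add_mul, smul_mul_assoc]
          _ = lam i • G + N i ^ (k+1) := by rw [← pow_succ']
      have hpow : ∀ n : ℕ, T ^ (n+1) * G
          = lam i ^ (n+1) • G + (((n:ℂ)+1) * lam i ^ n) • N i ^ (k+1) := by
        intro n
        induction n with
        | zero => simpa using hTG
        | succ n ihn =>
          have h1 : T ^ (n+1+1) * G = T * (T ^ (n+1) * G) := by rw [pow_succ', mul_assoc]
          rw [h1, ihn, mul_add, mul_smul_comm, mul_smul_comm, hTG, hTNk]
          push_cast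
          module
      have hineq : ∀ n : ℕ, ((n:ℝ)+1) * ‖N i ^ (k+1)‖ ≤ (C + 1) * ‖G‖ := by
        intro n
        have h2 : (((n:ℂ)+1) * lam i ^ n) • N i ^ (k+1) = T ^ (n+1) * G - lam i ^ (n+1) • G := by
          rw [hpow n]; abel
        have h3 : ‖(((n:ℂ)+1) * lam i ^ n) • N i ^ (k+1)‖
            = ((n:ℝ)+1) * ‖N i ^ (k+1)‖ := by
          have := norm_smul (((n:ℂ)+1) * lam i ^ n) (N i ^ (k+1))
          rw [this, norm_mul, norm_pow, hi, one_pow, mul_one]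
          congr 1
          have h9 : ((n:ℂ)+1) = ((n+1 : ℕ) : ℂ) := by push_cast; ring
          rw [h9, Complex.norm_natCast]
          push_cast; ring
        have h4 : ‖T ^ (n+1) * G - lam i ^ (n+1) • G‖ ≤ C * ‖G‖ + ‖G‖ := by
          refine le_trans (norm_sub_le _ _) ?_
          have h5 : ‖T ^ (n+1) * G‖ ≤ C * ‖G‖ :=
            le_trans (norm_mul_le _ _) (mul_le_mul_of_nonneg_right (hC (n+1)) (norm_nonneg _))
          have h6 : ‖lam i ^ (n+1) • G‖ ≤ ‖G‖ := by
            have := norm_smul (lam i ^ (n+1)) G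
            rw [this, norm_pow, hi, one_pow, one_mul]
          linarith
        rw [← h3, h2]
        linarith
      have hzero : ‖N i ^ (k+1)‖ = 0 := by
        by_contra hne
        have hpos : 0 < ‖N i ^ (k+1)‖ := lt_of_le_of_ne (norm_nonneg _) (Ne.symm hne)
        obtain ⟨n, hn⟩ := exists_nat_gt ((C + 1) * ‖G‖ / ‖N i ^ (k+1)‖)
        have := hineq n
        have h7 : ((n:ℝ)+1) * ‖N i ^ (k+1)‖ > (C + 1) * ‖G‖ := by
          rw [gt_iff_lt, ← div_lt_iff₀ hpos] at *
          linarith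
        linarith
      rw [norm_eq_zero] at hzero
      exact hzero
    obtain ⟨m, hm⟩ := hNnil i
    have hstep : ∀ m : ℕ, N i ^ (m+1) = 0 → N i = 0 := by
      intro m
      induction m with
      | zero => intro h; simpa using h
      | succ m ihm => intro h; exact ihm (down m h)
    cases m with
    | zero =>
      have h1 : (1 : V →L[ℂ] V) = 0 := by simpa using hm
      calc N i = N i * 1 := (mul_one _).symm
        _ = N i * 0 := by rw [h1]
        _ = 0 := mul_zero _
    | succ m => exact hstep m hm
  have hPT : ∀ j, P j * T = lam j • P j + N j := by
    intro j
    rw [hT, Finset.mul_sum]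
    rw [Finset.sum_eq_single j]
    · rw [mul_add, mul_smul_comm, hPP, if_pos rfl, hPN]
    · intro i _ hij
      rw [mul_add, mul_smul_comm, hPP, if_neg (Ne.symm hij), smul_zero,
        hPN0 j i (Ne.symm hij), add_zero]
    · intro h; exact absurd (Finset.mem_univ j) h
  have hmemu : ∀ i ∈ u, ‖lam i‖ = 1 := by
    intro i hi
    rw [hu, Finset.mem_filter] at hi
    exact hi.2
  have hTinf1 : Tinf = ∑ i ∈ u, lam i • P i := by rw [hTinf, hu]; rfl
  -- Tinf powers
  have hTinf_pow : ∀ m : ℕ, Tinf ^ (m+1) = ∑ i ∈ u, lam i ^ (m+1) • P i := by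
    intro m
    induction m with
    | zero => rw [pow_one, hTinf1]; simp
    | succ m ih =>
      rw [pow_succ, ih]
      conv_lhs => rw [hTinf1]
      rw [Finset.sum_mul]
      refine Finset.sum_congr rfl fun i hi => ?_
      rw [Finset.mul_sum]
      rw [Finset.sum_eq_single_of_mem i hi]
      · rw [smul_mul_assoc, mul_smul_comm, hPP, if_pos rfl, smul_smul, ← pow_succ]
      · intro j _ hji
        rw [smul_mul_assoc, mul_smul_comm, hPP0 i j (Ne.symm hji), smul_zero, smul_zero]
  -- splitting
  have hTmulTinf : T * Tinf = ∑ i ∈ u, (lam i * lam i) • P i := by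
    rw [hTinf1, Finset.mul_sum]
    refine Finset.sum_congr rfl fun i hi => ?_
    rw [mul_smul_comm, hTP, hNu i (hmemu i hi), add_zero, smul_smul]
  have hTinfmulT : Tinf * T = ∑ i ∈ u, (lam i * lam i) • P i := by
    rw [hTinf1, Finset.sum_mul]
    refine Finset.sum_congr rfl fun i hi => ?_
    rw [smul_mul_assoc, hPT, hNu i (hmemu i hi), add_zero, smul_smul]
  have hTinfsq : Tinf * Tinf = ∑ i ∈ u, (lam i * lam i) • P i := by
    have h2 := hTinf_pow 1
    norm_num at h2
    rw [← sq, h2]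
    refine Finset.sum_congr rfl fun i hi => ?_
    rw [sq]
  have hST : S * Tinf = 0 := by
    rw [hS, ← hTinf, sub_mul, hTmulTinf, hTinfsq, sub_self]
  have hTS : Tinf * S = 0 := by
    rw [hS, ← hTinf, mul_sub, hTinfmulT, hTinfsq, sub_self]
  have hTeq : T = S + Tinf := by rw [hS, ← hTinf]; abel
  have hsplitpow : ∀ n : ℕ, T ^ (n+1) = S ^ (n+1) + Tinf ^ (n+1) := by
    intro n
    induction n with
    | zero => simpa using hTeq
    | succ n ih =>
      have h1 : T ^ (n+1+1) = T ^ (n+1) * T := pow_succ T (n+1)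
      rw [h1, ih, hTeq, add_mul, mul_add, mul_add]
      have h2 : S ^ (n+1) * Tinf = 0 := by rw [pow_succ, mul_assoc, hST, mul_zero]
      have h3 : Tinf ^ (n+1) * S = 0 := by rw [pow_succ, mul_assoc, hTS, mul_zero]
      rw [h2, h3, ← pow_succ, ← pow_succ]
      abel
  -- annihilating polynomial data
  obtain ⟨ℓ, hlen, hspec, hprod0⟩ := annihilating_list S
  have hlenD : ℓ.length ≤ D := hD ▸ hlen
  have hzμ : ∀ z ∈ ℓ, ‖z‖ ≤ μ := by
    intro z hz
    have hmem := hspec z hz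
    have h1 : (‖z‖₊ : ℝ≥0∞) ≤ spectralRadius ℂ S := le_iSup₂ (α := ℝ≥0∞) z hmem
    rw [hμ] at h1
    have h2 := ENNReal.toReal_mono (by simp) h1
    rw [ENNReal.toReal_ofReal hμ0.le, ENNReal.coe_toReal] at h2
    exact_mod_cast h2
  -- generic chain bound
  have chain : ∀ B' : ℝ, μ ≤ B' → (∀ z ∈ ℓ, ‖S - z • 1‖ ≤ B') → ∀ n : ℕ, 1 ≤ n →
      ‖S ^ n‖ ≤ 2 * μ ^ ((n : ℤ) - D + 1) * (n : ℝ) ^ (D - 1) * B' ^ (D - 1) := by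
    intro B' hμB hB n hn
    have hB'0 : (0:ℝ) ≤ B' := le_trans hμ0.le hμB
    have h0 : ‖S ^ n‖ ≤ ∑ k ∈ Finset.range ℓ.length, (n.choose k : ℝ) * μ ^ ((n:ℤ) - k) * B' ^ k := by
      have hkb := key_bound S μ B' hμ0 ℓ hzμ hB 1 (by rw [mul_one]; exact hprod0) n
      rwa [mul_one, hone, mul_one] at hkb
    have h1 : (∑ k ∈ Finset.range ℓ.length, (n.choose k : ℝ) * μ ^ ((n:ℤ) - k) * B' ^ k)
        ≤ ∑ k ∈ Finset.range D, (n.choose k : ℝ) * μ ^ ((n:ℤ) - k) * B' ^ k := by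
      refine Finset.sum_le_sum_of_subset_of_nonneg
        (Finset.range_subset_range.mpr hlenD) fun k _ _ => ?_
      have hzp := zpow_pos hμ0 ((n:ℤ) - k)
      positivity
    have h2 : ∀ k ∈ Finset.range D, (n.choose k : ℝ) * μ ^ ((n:ℤ) - k) * B' ^ k
        ≤ (n.choose k : ℝ) * (μ ^ ((n:ℤ) - D + 1) * B' ^ (D - 1)) := by
      intro k hk
      have hkD : k ≤ D - 1 := by have := Finset.mem_range.mp hk; omega
      have hz1 : μ ^ ((n:ℤ) - k) = μ ^ ((n:ℤ) - D + 1) * μ ^ (D - 1 - k : ℕ) := by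
        rw [← zpow_natCast μ (D - 1 - k), ← zpow_add₀ hμ0.ne']
        congr 1
        omega
      have hz2 : μ ^ (D - 1 - k : ℕ) ≤ B' ^ (D - 1 - k : ℕ) :=
        pow_le_pow_left₀ hμ0.le hμB _
      have hz3 : (0:ℝ) < μ ^ ((n:ℤ) - D + 1) := zpow_pos hμ0 _
      calc (n.choose k : ℝ) * μ ^ ((n:ℤ) - k) * B' ^ k
          = (n.choose k : ℝ) * (μ ^ ((n:ℤ) - D + 1) * μ ^ (D - 1 - k : ℕ)) * B' ^ k := by
            rw [hz1]
        _ ≤ (n.choose k : ℝ) * (μ ^ ((n:ℤ) - D + 1) * B' ^ (D - 1 - k : ℕ)) * B' ^ k := by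
            have hc0 : (0:ℝ) ≤ (n.choose k : ℝ) := Nat.cast_nonneg _
            have hp0 : (0:ℝ) ≤ B' ^ k := pow_nonneg hB'0 _
            have := mul_le_mul_of_nonneg_left hz2 hz3.le
            nlinarith [mul_le_mul_of_nonneg_left (mul_le_mul_of_nonneg_left hz2 hz3.le) hc0]
        _ = (n.choose k : ℝ) * (μ ^ ((n:ℤ) - D + 1) * B' ^ (D - 1)) := by
            rw [mul_assoc, mul_assoc, ← pow_add]
            congr 3
            omega
    have h3 : (∑ k ∈ Finset.range D, (n.choose k : ℝ) * μ ^ ((n:ℤ) - k) * B' ^ k)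
        ≤ (∑ k ∈ Finset.range D, (n.choose k : ℝ)) * (μ ^ ((n:ℤ) - D + 1) * B' ^ (D - 1)) := by
      rw [Finset.sum_mul]
      exact Finset.sum_le_sum h2
    have h4 : (∑ k ∈ Finset.range D, (n.choose k : ℝ)) ≤ 2 * (n:ℝ) ^ (D - 1) := by
      have := sum_choose_le D hn
      calc (∑ k ∈ Finset.range D, (n.choose k : ℝ))
          = ((∑ k ∈ Finset.range D, n.choose k : ℕ) : ℝ) := by push_cast; ring
        _ ≤ ((2 * n ^ (D-1) : ℕ) : ℝ) := Nat.cast_le.mpr this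
        _ = 2 * (n:ℝ) ^ (D - 1) := by push_cast; ring
    have h5 : (0:ℝ) ≤ μ ^ ((n:ℤ) - D + 1) * B' ^ (D - 1) := by
      have := zpow_pos hμ0 ((n:ℤ) - D + 1)
      positivity
    calc ‖S ^ n‖ ≤ _ := h0
      _ ≤ _ := h1
      _ ≤ _ := h3
      _ ≤ (2 * (n:ℝ) ^ (D - 1)) * (μ ^ ((n:ℤ) - D + 1) * B' ^ (D - 1)) :=
          mul_le_mul_of_nonneg_right h4 h5
      _ = 2 * μ ^ ((n : ℤ) - D + 1) * (n : ℝ) ^ (D - 1) * B' ^ (D - 1) := by ring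
  -- decay of ‖S^m‖
  have decay : Filter.Tendsto (fun m : ℕ => ‖S ^ m‖) Filter.atTop (nhds 0) := by
    set B₀ : ℝ := ‖S‖ + μ with hB₀def
    have hμB₀ : μ ≤ B₀ := le_add_of_nonneg_left (norm_nonneg S)
    have hB₀ : ∀ z ∈ ℓ, ‖S - z • 1‖ ≤ B₀ := by
      intro z hz
      refine le_trans (norm_sub_le _ _) ?_
      have hz1 : ‖z • (1 : V →L[ℂ] V)‖ ≤ ‖z‖ := by
        refine le_trans (ContinuousLinearMap.opNorm_smul_le _ _) ?_
        rw [hone, mul_one]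
      have := hzμ z hz
      have := le_trans hz1 this
      rw [hB₀def]
      linarith
    set K : ℝ := 2 * μ ^ ((1:ℤ) - D) * B₀ ^ (D - 1) with hKdef
    have hb : ∀ m : ℕ, 1 ≤ m → ‖S ^ m‖ ≤ K * ((m:ℝ) ^ (D-1) * μ ^ m) := by
      intro m hm
      calc ‖S ^ m‖ ≤ 2 * μ ^ ((m : ℤ) - D + 1) * (m : ℝ) ^ (D - 1) * B₀ ^ (D - 1) :=
            chain B₀ hμB₀ hB₀ m hm
        _ = K * ((m:ℝ) ^ (D-1) * μ ^ m) := by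
            rw [hKdef, show ((m:ℤ) - D + 1) = ((1:ℤ) - D) + (m:ℕ) from by omega,
              zpow_add₀ hμ0.ne', zpow_natCast]
            ring
    refine squeeze_zero' (Filter.Eventually.of_forall fun m => norm_nonneg _)
      (Filter.eventually_atTop.mpr ⟨1, fun m hm => hb m hm⟩) ?_
    have h := (tendsto_pow_const_mul_const_pow_of_lt_one (D-1) hμ0.le hμ1).const_mul K
    rw [mul_zero] at h
    exact h
  -- almost periodicity: ‖Tinf‖ ≤ C
  have hTinfC : ‖Tinf‖ ≤ C := by
    set K : ℝ := ∑ i ∈ u, ‖P i‖ with hKdef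
    have hK0 : 0 ≤ K := Finset.sum_nonneg fun i _ => norm_nonneg _
    have hrec : ∀ ε : ℝ, 0 < ε → ∀ M : ℕ, 1 ≤ M →
        ∃ n : ℕ, M ≤ n ∧ ∀ i ∈ u, ‖lam i ^ n - 1‖ < ε := by
      intro ε hε M hM
      set g : ℕ → (ι → ℂ) := fun n i => if i ∈ u then lam i ^ (n * M) else 0 with hg
      have hgball : ∀ n, g n ∈ Metric.closedBall (0 : ι → ℂ) 1 := by
        intro n
        rw [Metric.mem_closedBall, dist_zero_right]
        refine (pi_norm_le_iff_of_nonneg zero_le_one).mpr fun i => ?_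
        by_cases hi : i ∈ u
        · simp only [hg, if_pos hi]
          rw [norm_pow, hmemu i hi, one_pow]
        · simp only [hg, if_neg hi, norm_zero]
          exact zero_le_one
      obtain ⟨a, -, φ, hφ, hconv⟩ := (isCompact_closedBall (0:ι→ℂ) 1).tendsto_subseq hgball
      have hcauchy : CauchySeq (g ∘ φ) := hconv.cauchySeq
      rw [Metric.cauchySeq_iff] at hcauchy
      obtain ⟨Nq, hNq⟩ := hcauchy ε hε
      have hlt : φ Nq < φ (Nq + 1) := hφ (Nat.lt_succ_self Nq)
      refine ⟨(φ (Nq+1) - φ Nq) * M, ?_, ?_⟩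
      · have h1 : 1 ≤ φ (Nq+1) - φ Nq := by omega
        calc M = 1 * M := (one_mul M).symm
          _ ≤ (φ (Nq+1) - φ Nq) * M := Nat.mul_le_mul_right M h1
      · intro i hi
        have hd := hNq (Nq+1) (Nat.le_succ _) Nq (le_refl _)
        rw [dist_eq_norm] at hd
        have hco : ‖(g (φ (Nq+1)) - g (φ Nq)) i‖ < ε :=
          lt_of_le_of_lt (norm_le_pi_norm _ i) hd
        simp only [Pi.sub_apply, hg, if_pos hi] at hco
        have hlam : ‖lam i ^ ((φ (Nq+1) - φ Nq) * M) - 1‖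
            = ‖lam i ^ (φ (Nq+1) * M) - lam i ^ (φ Nq * M)‖ := by
          have hsplit : φ (Nq+1) * M = φ Nq * M + (φ (Nq+1) - φ Nq) * M := by
            rw [← add_mul]
            congr 1
            omega
          rw [hsplit, pow_add]
          rw [show lam i ^ (φ Nq * M) * lam i ^ ((φ (Nq+1) - φ Nq) * M) - lam i ^ (φ Nq * M)
              = lam i ^ (φ Nq * M) * (lam i ^ ((φ (Nq+1) - φ Nq) * M) - 1) from by ring]
          rw [norm_mul, norm_pow, hmemu i hi, one_pow, one_mul]
        rw [hlam]
        exact hco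
    refine le_of_forall_pos_le_add fun δ hδ => ?_
    have h2 : ∀ᶠ m in Filter.atTop, ‖S ^ m‖ < δ/2 :=
      decay.eventually_lt_const (by linarith)
    obtain ⟨M₀, hM₀⟩ := Filter.eventually_atTop.mp h2
    have hεpos : 0 < δ / (2 * (K+1)) := by positivity
    obtain ⟨n, hnM, happ⟩ := hrec (δ / (2 * (K+1))) hεpos (max M₀ 1) (le_max_right _ _)
    have h3 : ‖Tinf ^ (n+1)‖ ≤ C + δ/2 := by
      have hsp := hsplitpow n
      have heq : Tinf ^ (n+1) = T ^ (n+1) - S ^ (n+1) := by rw [hsp]; abel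
      rw [heq]
      refine le_trans (norm_sub_le _ _) ?_
      have h5 := le_of_lt (hM₀ (n+1) (by omega))
      have h6 := hC (n+1)
      linarith
    have h4 : ‖Tinf - Tinf ^ (n+1)‖ ≤ (δ / (2 * (K+1))) * K := by
      rw [hTinf_pow n]
      conv_lhs => rw [hTinf1]
      rw [← Finset.sum_sub_distrib]
      refine le_trans (norm_sum_le _ _) ?_
      have hterm : ∀ i ∈ u, ‖lam i • P i - lam i ^ (n+1) • P i‖
          ≤ (δ / (2 * (K+1))) * ‖P i‖ := by
        intro i hi
        rw [← sub_smul]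
        have hns := norm_smul (lam i - lam i ^ (n+1)) (P i)
        rw [hns]
        refine mul_le_mul_of_nonneg_right ?_ (norm_nonneg _)
        have hfac : lam i - lam i ^ (n+1) = lam i * (1 - lam i ^ n) := by ring
        rw [hfac, norm_mul, hmemu i hi, one_mul, norm_sub_rev]
        exact le_of_lt (happ i hi)
      refine le_trans (Finset.sum_le_sum hterm) ?_
      rw [← Finset.mul_sum]
    have h5 : (δ / (2 * (K+1))) * K ≤ δ/2 := by
      rw [div_mul_eq_mul_div, div_le_div_iff₀ (by positivity) (by norm_num)]
      nlinarith
    calc ‖Tinf‖ = ‖Tinf ^ (n+1) + (Tinf - Tinf ^ (n+1))‖ := by congr 1; abel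
      _ ≤ ‖Tinf ^ (n+1)‖ + ‖Tinf - Tinf ^ (n+1)‖ := norm_add_le _ _
      _ ≤ (C + δ/2) + δ/2 := add_le_add h3 (le_trans h4 h5)
      _ = C + δ := by ring
  -- conclusion
  have hS2C : ‖S‖ ≤ 2 * C := by
    rw [hS]
    refine le_trans (norm_sub_le _ _) ?_
    have h1 : ‖T‖ ≤ C := by have := hC 1; rwa [pow_one] at this
    linarith
  have hBfin : ∀ z ∈ ℓ, ‖S - z • 1‖ ≤ μ + 2 * C := by
    intro z hz
    refine le_trans (norm_sub_le _ _) ?_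
    have hz1 : ‖z • (1 : V →L[ℂ] V)‖ ≤ ‖z‖ := by
      refine le_trans (ContinuousLinearMap.opNorm_smul_le _ _) ?_
      rw [hone, mul_one]
    have := hzμ z hz
    have h2 := le_trans hz1 this
    linarith
  intro n
  rcases Nat.eq_zero_or_pos n with hn | hn
  · subst hn
    simp only [pow_zero, sub_self, norm_zero, Nat.cast_zero]
    have h1 : (0:ℝ) < μ ^ ((0 : ℤ) - D + 1) := zpow_pos hμ0 _
    have h2 : (0:ℝ) < μ + 2 * C := by linarith
    positivity
  · obtain ⟨m, rfl⟩ : ∃ m, n = m + 1 := ⟨n - 1, by omega⟩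
    have heq : T ^ (m+1) - Tinf ^ (m+1) = S ^ (m+1) := by
      rw [hsplitpow m]; abel
    rw [heq]
    exact chain (μ + 2*C) (by linarith) hBfin (m+1) (by omega)
end

section
/- Let X be an operator with ‖X^n‖ ≤ C for all n, and let m be a polynomial annihilating X (m(X) = 0). Then for any f in the Wiener algebra, ‖f(X)‖ ≤ C · inf{‖f + m·b‖_W : b ∈ W}. -/
/-- If `‖X^n‖ ≤ C` for all `n` and the polynomial `m` annihilates `X`, then for any
Wiener-algebra function `f(z) = ∑ a_k z^k`,
`‖f(X)‖ ≤ C · inf { ‖f + m·b‖_W : b ∈ W }`. -/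
theorem stmt8 {E : Type} [NormedAddCommGroup E] [NormedSpace ℂ E] [CompleteSpace E]
    (X : E →L[ℂ] E) (C : ℝ) (hC : ∀ n : ℕ, ‖X ^ n‖ ≤ C)
    (m : Polynomial ℂ) (hm : m ≠ 0) (hmX : Polynomial.aeval X m = 0)
    (a : ℕ → ℂ) (ha : Summable fun k => ‖a k‖) :
    ‖∑' k, a k • X ^ k‖ ≤
      C * sInf {r : ℝ | ∃ b : ℕ → ℂ, Summable (fun k => ‖b k‖) ∧
        r = ∑' k, ‖a k + ∑ j ∈ Finset.range (k + 1), m.coeff j * b (k - j)‖} := by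
  have hC0 : 0 ≤ C := le_trans (norm_nonneg _) (hC 0)
  set S := {r : ℝ | ∃ b : ℕ → ℂ, Summable (fun k => ‖b k‖) ∧
        r = ∑' k, ‖a k + ∑ j ∈ Finset.range (k + 1), m.coeff j * b (k - j)‖} with hS
  have hcoeff : ∀ k, k ∉ Finset.range (m.natDegree + 1) → m.coeff k = 0 := by
    intro k hk
    apply Polynomial.coeff_eq_zero_of_natDegree_lt
    simp only [Finset.mem_range, not_lt] at hk
    omega
  -- key estimate
  have key : ∀ r ∈ S, ‖∑' k, a k • X ^ k‖ ≤ C * r := by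
    rintro r ⟨b, hb, rfl⟩
    set c : ℕ → ℂ := fun k => a k + ∑ j ∈ Finset.range (k + 1), m.coeff j * b (k - j) with hc
    have hmnorm : Summable fun k => ‖m.coeff k‖ :=
      summable_of_ne_finset_zero (s := Finset.range (m.natDegree + 1))
        (fun k hk => by rw [hcoeff k hk, norm_zero])
    have hconv : Summable fun k => ‖∑ j ∈ Finset.range (k + 1), m.coeff j * b (k - j)‖ :=
      summable_norm_sum_mul_range_of_summable_norm hmnorm hb
    have hcs : Summable fun k => ‖c k‖ :=
      Summable.of_nonneg_of_le (fun k => norm_nonneg _)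
        (fun k => norm_add_le _ _) (ha.add hconv)
    -- operator-valued series
    have hu : Summable fun k => ‖m.coeff k • X ^ k‖ :=
      summable_of_ne_finset_zero (s := Finset.range (m.natDegree + 1))
        (fun k hk => by rw [hcoeff k hk, zero_smul, norm_zero])
    have hsm : ∀ (d : ℕ → ℂ) (k : ℕ), ‖d k • X ^ k‖ ≤ C * ‖d k‖ := by
      intro d k
      rw [norm_smul (d k) (X ^ k)]
      calc ‖d k‖ * ‖X ^ k‖ ≤ ‖d k‖ * C :=
            mul_le_mul_of_nonneg_left (hC k) (norm_nonneg _)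
        _ = C * ‖d k‖ := mul_comm _ _
    have hv : Summable fun k => ‖b k • X ^ k‖ :=
      Summable.of_nonneg_of_le (fun k => norm_nonneg _) (hsm b) (hb.mul_left C)
    have hva : Summable fun k => ‖a k • X ^ k‖ :=
      Summable.of_nonneg_of_le (fun k => norm_nonneg _) (hsm a) (ha.mul_left C)
    have hvc : Summable fun k => ‖c k • X ^ k‖ :=
      Summable.of_nonneg_of_le (fun k => norm_nonneg _) (hsm c) (hcs.mul_left C)
    -- tsum of m-part equals aeval X m = 0
    have htu : (∑' k, m.coeff k • X ^ k) = Polynomial.aeval X m := by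
      rw [tsum_eq_sum (s := Finset.range (m.natDegree + 1))
        (fun k hk => by rw [hcoeff k hk, zero_smul])]
      rw [Polynomial.aeval_eq_sum_range]
    have heq : ∀ n, (∑ j ∈ Finset.range (n + 1), m.coeff j * b (n - j)) • X ^ n
        = ∑ j ∈ Finset.range (n + 1), (m.coeff j • X ^ j) * (b (n - j) • X ^ (n - j)) := by
      intro n
      rw [Finset.sum_smul]
      refine Finset.sum_congr rfl fun j hj => ?_
      have hXX : X ^ j * X ^ (n - j) = X ^ n := by
        rw [← pow_add]
        congr 1
        have := Finset.mem_range.mp hj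
        omega
      rw [smul_mul_smul_comm, hXX]
    have hcauchy : (∑' n, (∑ j ∈ Finset.range (n + 1), m.coeff j * b (n - j)) • X ^ n) = 0 := by
      calc (∑' n, (∑ j ∈ Finset.range (n + 1), m.coeff j * b (n - j)) • X ^ n)
          = ∑' n, ∑ j ∈ Finset.range (n + 1),
              (m.coeff j • X ^ j) * (b (n - j) • X ^ (n - j)) := tsum_congr heq
        _ = (∑' k, m.coeff k • X ^ k) * ∑' k, b k • X ^ k :=
            (tsum_mul_tsum_eq_tsum_sum_range_of_summable_norm hu hv).symm
        _ = 0 := by rw [htu, hmX, zero_mul]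
    have hconvop : Summable fun n =>
        ‖(∑ j ∈ Finset.range (n + 1), m.coeff j * b (n - j)) • X ^ n‖ :=
      (summable_norm_sum_mul_range_of_summable_norm hu hv).congr
        fun n => congrArg norm (heq n).symm
    have hsplit : (∑' k, c k • X ^ k) = ∑' k, a k • X ^ k := by
      have h1 : (fun k => c k • X ^ k)
          = fun k => a k • X ^ k + (∑ j ∈ Finset.range (k + 1), m.coeff j * b (k - j)) • X ^ k := by
        funext k
        rw [hc]
        exact add_smul _ _ _
      rw [h1, Summable.tsum_add hva.of_norm hconvop.of_norm, hcauchy, add_zero]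
    calc ‖∑' k, a k • X ^ k‖ = ‖∑' k, c k • X ^ k‖ := by rw [hsplit]
      _ ≤ ∑' k, ‖c k • X ^ k‖ := norm_tsum_le_tsum_norm hvc
      _ ≤ ∑' k, C * ‖c k‖ := Summable.tsum_le_tsum (hsm c) hvc (hcs.mul_left C)
      _ = C * ∑' k, ‖c k‖ := tsum_mul_left
  have hne : S.Nonempty := ⟨∑' k, ‖a k + ∑ j ∈ Finset.range (k + 1), m.coeff j * (0 : ℂ)‖,
    (0 : ℕ → ℂ), by simpa using summable_zero, rfl⟩
  have hbdd : BddBelow S := ⟨0, by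
    rintro r ⟨b, hb, rfl⟩
    exact tsum_nonneg fun k => norm_nonneg _⟩
  rcases eq_or_lt_of_le hC0 with hCeq | hCpos
  · obtain ⟨r, hr⟩ := hne
    have := key r hr
    rw [← hCeq] at this ⊢
    simpa using this
  · by_contra h
    push_neg at h
    have hlt : sInf S < ‖∑' k, a k • X ^ k‖ / C := by
      rw [lt_div_iff₀ hCpos]
      linarith [h]
    obtain ⟨r, hrS, hr⟩ := exists_lt_of_csInf_lt hne hlt
    have h2 := (lt_div_iff₀ hCpos).mp hr
    have := key r hrS
    nlinarith
end

section
/- Let d ≥ 2 and let T be the d×d lower bidiagonal stochastic matrix with T_{ii} = λ_i for i < d, T_{dd} = 1, and T_{i+1,i} = 1 − λ_i, where λ_i ∈ [0,1). Then for every n ≤ d − 2, the (d,1) entry of T^n is zero, and consequently ‖T^n − T_∞‖_{1→1} = 2, where T_∞ = lim_{n→∞} T^n. -/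
open Filter Finset

/-- The lower bidiagonal column-stochastic matrix with diagonal `λ_1,…,λ_{d-1},1` and
subdiagonal `1-λ_i` converges slowly: for `n ≤ d-2` the `(d,1)` entry of `T^n` vanishes
and `‖T^n - T_∞‖_{1→1} = 2` (as an attained supremum over `ℓ¹`-normalized vectors). -/
theorem stmt14 (d : ℕ) (hd : 2 ≤ d) (lam : Fin d → ℝ)
    (hlam : ∀ i, 0 ≤ lam i ∧ lam i < 1)
    (T Tinf : Matrix (Fin d) (Fin d) ℝ)
    (hT : ∀ i j : Fin d, T i j =
      if i = j then (if (i : ℕ) = d - 1 then 1 else lam i)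
      else if (i : ℕ) = (j : ℕ) + 1 then 1 - lam j else 0)
    (hlim : Filter.Tendsto (fun n : ℕ => T ^ n) Filter.atTop (nhds Tinf)) :
    ∀ n : ℕ, n ≤ d - 2 →
      (T ^ n) ⟨d - 1, by omega⟩ ⟨0, by omega⟩ = 0 ∧
      IsGreatest {r : ℝ | ∃ v : Fin d → ℝ, (∑ i, |v i|) = 1 ∧
        r = ∑ i, |(T ^ n - Tinf).mulVec v i|} 2 := by
  intro n hn
  have hd1 : d - 1 < d := by omega
  have h0d : (0 : ℕ) < d := by omega
  set e0 : Fin d := ⟨0, h0d⟩ with he0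
  set ed : Fin d := ⟨d - 1, hd1⟩ with hed
  -- entries of T are nonnegative
  have Tnn : ∀ i j : Fin d, 0 ≤ T i j := by
    intro i j
    rw [hT]
    split_ifs with h1 h2 h3
    · norm_num
    · exact (hlam i).1
    · have := (hlam j).2; linarith
    · exact le_rfl
  -- columns of T sum to 1
  have Tcol : ∀ j : Fin d, ∑ i, T i j = 1 := by
    intro j
    by_cases hj : (j : ℕ) = d - 1
    · rw [Finset.sum_eq_single j]
      · rw [hT]; simp [hj]
      · intro i _ hij
        rw [hT]
        have h2 : ¬ (i : ℕ) = (j : ℕ) + 1 := by have := i.isLt; omega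
        simp [hij, h2]
      · simp
    · have hj1 : (j : ℕ) + 1 < d := by have := j.isLt; omega
      set j' : Fin d := ⟨(j : ℕ) + 1, hj1⟩ with hj'
      have hvj' : (j' : ℕ) = (j : ℕ) + 1 := rfl
      have hne : j ≠ j' := by simp [Fin.ext_iff, hj']
      rw [← Finset.sum_subset (Finset.subset_univ {j, j'})]
      · rw [Finset.sum_pair hne]
        have e1 : T j j = lam j := by rw [hT]; simp [hj]
        have e2 : T j' j = 1 - lam j := by
          rw [hT, if_neg (Ne.symm hne), if_pos hvj']
        rw [e1, e2]; ring
      · intro i _ hi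
        simp only [Finset.mem_insert, Finset.mem_singleton, not_or] at hi
        rw [hT]
        have h1 : i ≠ j := hi.1
        have h2 : ¬ (i : ℕ) = (j : ℕ) + 1 := by
          intro h
          exact hi.2 (Fin.ext (by simp [hj', h]))
        simp [h1, h2]
  -- powers: nonnegative entries
  have Pnn : ∀ (m : ℕ) (i j : Fin d), 0 ≤ (T ^ m) i j := by
    intro m
    induction m with
    | zero =>
      intro i j
      simp only [pow_zero, Matrix.one_apply]
      split_ifs <;> norm_num
    | succ m ih =>
      intro i j
      rw [pow_succ, Matrix.mul_apply]
      exact Finset.sum_nonneg fun k _ => mul_nonneg (ih i k) (Tnn k j)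
  -- powers: column sums are 1
  have Pcol : ∀ (m : ℕ) (j : Fin d), ∑ i, (T ^ m) i j = 1 := by
    intro m
    induction m with
    | zero =>
      intro j
      simp [Matrix.one_apply]
    | succ m ih =>
      intro j
      have : ∀ i : Fin d, (T ^ (m + 1)) i j = ∑ k, (T ^ m) i k * T k j := by
        intro i; rw [pow_succ, Matrix.mul_apply]
      simp_rw [this]
      rw [Finset.sum_comm]
      have : ∀ k : Fin d, ∑ i, (T ^ m) i k * T k j = T k j := by
        intro k
        rw [← Finset.sum_mul, ih k, one_mul]
      simp_rw [this]
      exact Tcol j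
  -- powers: band structure
  have Pzero : ∀ (m : ℕ) (i j : Fin d), (j : ℕ) + m < (i : ℕ) → (T ^ m) i j = 0 := by
    intro m
    induction m with
    | zero =>
      intro i j h
      have : i ≠ j := by intro he; rw [he] at h; omega
      simp [pow_zero, Matrix.one_apply, this]
    | succ m ih =>
      intro i j h
      rw [pow_succ, Matrix.mul_apply]
      apply Finset.sum_eq_zero
      intro k _
      by_cases hk : (k : ℕ) ≤ (j : ℕ) + 1
      · rw [ih i k (by omega), zero_mul]
      · have h1 : k ≠ j := by intro he; rw [he] at hk; omega
        have h2 : ¬ (k : ℕ) = (j : ℕ) + 1 := by omega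
        rw [hT]; simp [h1, h2]
  have hzero : (T ^ n) ed e0 = 0 := Pzero n ed e0 (by simp [hed, he0]; omega)
  -- entrywise convergence
  have htend : ∀ i j : Fin d, Tendsto (fun m => (T ^ m) i j) atTop (nhds (Tinf i j)) := by
    intro i j
    have hc : Continuous fun M : Matrix (Fin d) (Fin d) ℝ => M i j :=
      (continuous_apply j).comp (continuous_apply i)
    exact (hc.tendsto Tinf).comp hlim
  have Tinfnn : ∀ i j : Fin d, 0 ≤ Tinf i j := fun i j =>
    ge_of_tendsto' (htend i j) fun m => Pnn m i j
  have Tinfcol : ∀ j : Fin d, ∑ i, Tinf i j = 1 := by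
    intro j
    have h1 : Tendsto (fun m => ∑ i, (T ^ m) i j) atTop (nhds (∑ i, Tinf i j)) :=
      tendsto_finset_sum _ fun i _ => htend i j
    have h2 : (fun m => ∑ i, (T ^ m) i j) = fun _ => (1 : ℝ) := funext fun m => Pcol m j
    rw [h2] at h1
    exact tendsto_nhds_unique h1 tendsto_const_nhds
  -- fixed point
  have hfix : T * Tinf = Tinf := by
    have h1 : Tendsto (fun m => T ^ (m + 1)) atTop (nhds Tinf) :=
      hlim.comp (tendsto_add_atTop_nat 1)
    have hc : Continuous fun M : Matrix (Fin d) (Fin d) ℝ => T * M := by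
      apply continuous_pi; intro i; apply continuous_pi; intro j
      simp only [Matrix.mul_apply]
      exact continuous_finset_sum _ fun k _ =>
        (continuous_const.mul (((continuous_apply j).comp (continuous_apply k))))
    have h2 : Tendsto (fun m => T * T ^ m) atTop (nhds (T * Tinf)) :=
      (hc.tendsto Tinf).comp hlim
    have h3 : (fun m => T ^ (m + 1)) = fun m => T * T ^ m := funext fun m => pow_succ' T m
    rw [h3] at h1
    exact tendsto_nhds_unique h2 h1
  -- first column of Tinf vanishes below d-1
  have hq0 : ∀ i : ℕ, (h : i < d - 1) → Tinf ⟨i, by omega⟩ e0 = 0 := by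
    intro i
    induction i with
    | zero =>
      intro h
      have key : Tinf ⟨0, by omega⟩ e0 = lam ⟨0, by omega⟩ * Tinf ⟨0, by omega⟩ e0 := by
        conv_lhs => rw [← hfix, Matrix.mul_apply]
        rw [Finset.sum_eq_single (⟨0, by omega⟩ : Fin d)]
        · rw [hT]; simp; omega
        · intro k _ hk
          rw [hT]
          have h1 : (⟨0, by omega⟩ : Fin d) ≠ k := fun he => hk he.symm
          have h2 : ¬ ((⟨0, by omega⟩ : Fin d) : ℕ) = (k : ℕ) + 1 := by simp
          simp [h1, h2]
        · simp
      have hl := (hlam ⟨0, by omega⟩).2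
      nlinarith [key]
    | succ i ih =>
      intro h
      have hi : i < d - 1 := by omega
      have hi1 : i + 1 < d := by omega
      have hid : i < d := by omega
      set ki : Fin d := ⟨i, hid⟩ with hki
      set ks : Fin d := ⟨i + 1, hi1⟩ with hks
      have key : Tinf ks e0 = lam ks * Tinf ks e0 + (1 - lam ki) * Tinf ki e0 := by
        conv_lhs => rw [← hfix, Matrix.mul_apply]
        have hne : ks ≠ ki := by simp [hks, hki, Fin.ext_iff]
        rw [← Finset.sum_subset (Finset.subset_univ {ks, ki})]
        · rw [Finset.sum_pair hne, hT, hT]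
          have h1 : ¬ (ks : ℕ) = d - 1 := by simp [hks]; omega
          have h2 : (ks : ℕ) = (ki : ℕ) + 1 := by simp [hks, hki]
          simp [hne, h1, h2]
          exact fun h' => absurd (h2.trans h') h1
        · intro k _ hk
          simp only [Finset.mem_insert, Finset.mem_singleton, not_or] at hk
          rw [hT]
          have h1 : ks ≠ k := fun he => hk.1 he.symm
          have h2 : ¬ ((ks : ℕ) = (k : ℕ) + 1) := by
            intro he
            exact hk.2 (Fin.ext (by simp [hks] at he ⊢; omega)).symm
          simp [h1, h2]
      rw [ih hi] at key
      have hl := (hlam ks).2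
      nlinarith [key]
  -- Tinf (d-1) 0 = 1
  have hqd : Tinf ed e0 = 1 := by
    have hs := Tinfcol e0
    rw [Finset.sum_eq_single ed] at hs
    · exact hs
    · intro i _ hi
      have : (i : ℕ) < d - 1 := by
        have := i.isLt
        have : (i : ℕ) ≠ d - 1 := fun he => hi (Fin.ext (by simp [hed, he]))
        omega
      have := hq0 i this
      simpa using this
    · simp
  -- upper bound
  have hub : ∀ v : Fin d → ℝ, (∑ i, |v i|) = 1 →
      ∑ i, |(T ^ n - Tinf).mulVec v i| ≤ 2 := by
    intro v hv
    have step : ∀ i : Fin d, |(T ^ n - Tinf).mulVec v i|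
        ≤ ∑ j, ((T ^ n) i j + Tinf i j) * |v j| := by
      intro i
      rw [Matrix.mulVec, dotProduct]
      calc |∑ j, (T ^ n - Tinf) i j * v j|
          ≤ ∑ j, |(T ^ n - Tinf) i j * v j| := Finset.abs_sum_le_sum_abs _ _
        _ ≤ ∑ j, ((T ^ n) i j + Tinf i j) * |v j| := by
            apply Finset.sum_le_sum
            intro j _
            rw [abs_mul]
            apply mul_le_mul_of_nonneg_right _ (abs_nonneg _)
            simp only [Matrix.sub_apply]
            calc |(T ^ n) i j - Tinf i j| ≤ |(T ^ n) i j| + |Tinf i j| := abs_sub _ _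
              _ = (T ^ n) i j + Tinf i j := by
                  rw [abs_of_nonneg (Pnn n i j), abs_of_nonneg (Tinfnn i j)]
    calc ∑ i, |(T ^ n - Tinf).mulVec v i|
        ≤ ∑ i, ∑ j, ((T ^ n) i j + Tinf i j) * |v j| :=
          Finset.sum_le_sum fun i _ => step i
      _ = ∑ j, (∑ i, ((T ^ n) i j + Tinf i j)) * |v j| := by
          rw [Finset.sum_comm]
          exact Finset.sum_congr rfl fun j _ => (Finset.sum_mul _ _ _).symm
      _ = ∑ j, 2 * |v j| := by
          apply Finset.sum_congr rfl
          intro j _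
          rw [Finset.sum_add_distrib, Pcol n j, Tinfcol j]
          norm_num
      _ = 2 := by rw [← Finset.mul_sum, hv, mul_one]
  -- the witness
  have hmem : ∃ v : Fin d → ℝ, (∑ i, |v i|) = 1 ∧
      (2 : ℝ) = ∑ i, |(T ^ n - Tinf).mulVec v i| := by
    refine ⟨fun j => if j = e0 then 1 else 0, ?_, ?_⟩
    · rw [Finset.sum_eq_single e0] <;> simp +contextual
    · have hv : ∀ i : Fin d, (T ^ n - Tinf).mulVec (fun j => if j = e0 then 1 else 0) i
          = (T ^ n) i e0 - Tinf i e0 := by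
        intro i
        rw [Matrix.mulVec, dotProduct]
        rw [Finset.sum_eq_single e0]
        · simp [Matrix.sub_apply]
        · intro k _ hk; simp [hk]
        · simp
      simp_rw [hv]
      have h1 : |(T ^ n) ed e0 - Tinf ed e0| = 1 := by
        rw [hzero, hqd]; norm_num
      have h2 : ∀ i ∈ Finset.univ.erase ed, |(T ^ n) i e0 - Tinf i e0| = (T ^ n) i e0 := by
        intro i hi
        have hine : i ≠ ed := Finset.ne_of_mem_erase hi
        have : (i : ℕ) < d - 1 := by
          have := i.isLt
          have : (i : ℕ) ≠ d - 1 := fun he => hine (Fin.ext (by simp [hed, he]))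
          omega
        have hq := hq0 i this
        simp only [Fin.eta] at hq
        rw [hq, sub_zero, abs_of_nonneg (Pnn n i e0)]
      have hsplit2 : ∑ i ∈ Finset.univ.erase ed, (T ^ n) i e0 = 1 := by
        have h := Finset.sum_erase_add Finset.univ
          (fun i => (T ^ n) i e0) (Finset.mem_univ ed)
        rw [Pcol n e0, hzero, add_zero] at h
        exact h
      have hsum : ∑ i, |(T ^ n) i e0 - Tinf i e0|
          = ∑ i ∈ Finset.univ.erase ed, |(T ^ n) i e0 - Tinf i e0|
            + |(T ^ n) ed e0 - Tinf ed e0| :=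
        (Finset.sum_erase_add Finset.univ _ (Finset.mem_univ ed)).symm
      rw [hsum, Finset.sum_congr rfl h2, hsplit2, h1]
      norm_num
  exact ⟨hzero, hmem, fun r hr => by obtain ⟨v, hv, hrv⟩ := hr; rw [hrv]; exact hub v hv⟩
end

section
/- Let T be a power-bounded linear map on a finite-dimensional inner product space satisfying detailed balance with respect to a positive-definite B (i.e., T∘B = B∘T*). Then T has real spectrum and ‖T^n − T_∞^n‖_∞ ≤ μ^n ‖B^{1/2}‖_∞ ‖B^{−1/2}‖_∞ for all n ∈ ℕ, where μ < 1 is the spectral radius of T − T_∞. -/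
open Finset
open scoped ENNReal NNReal

private lemma conjPowAux {M : Type*} [Monoid M] {s t : M} (h1 : s * t = 1) (h2 : t * s = 1)
    (x : M) (n : ℕ) : (s * x * t) ^ n = s * x ^ n * t := by
  have k : ∀ y : M, t * (s * y) = y := fun y => by rw [← mul_assoc, h2, one_mul]
  induction n with
  | zero => simp [h1]
  | succ n ih =>
    rw [pow_succ, ih, pow_succ]
    simp only [mul_assoc, k]

private lemma sumProjPow {M : Type*} [Ring M] [Module ℂ M] [SMulCommClass ℂ M M]
    [IsScalarTower ℂ M M] {ι : Type*} [DecidableEq ι] (lam : ι → ℂ) (P : ι → M)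
    (hPP : ∀ i j, P i * P j = if i = j then P i else 0) (t : Finset ι) (n : ℕ) (hn : 1 ≤ n) :
    (∑ i ∈ t, lam i • P i) ^ n = ∑ i ∈ t, lam i ^ n • P i := by
  have key : ∀ (m : ℕ) (i j : ι),
      (lam i ^ m • P i) * (lam j • P j) = if i = j then lam i ^ (m + 1) • P i else 0 := by
    intro m i j
    by_cases h : i = j
    · subst h
      rw [smul_mul_assoc, mul_smul_comm, smul_smul, hPP, if_pos rfl, if_pos rfl, ← pow_succ]
    · rw [smul_mul_assoc, mul_smul_comm, smul_smul, hPP, if_neg h, if_neg h, smul_zero]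
  induction n with
  | zero => omega
  | succ n ih =>
    rcases Nat.eq_zero_or_pos n with h0 | h1
    · subst h0; simp
    · rw [pow_succ, ih h1, Finset.sum_mul_sum]
      refine Finset.sum_congr rfl fun i hi => ?_
      rw [Finset.sum_congr rfl fun j _ => key n i j, Finset.sum_ite_eq, if_pos hi]

set_option maxHeartbeats 1000000 in
/-- Detailed balance convergence bound: if `T` is power-bounded, diagonalizable with
eigenvalues `λ_i` and spectral projections `P_i`, and satisfies `T B = B T*` for a
positive-definite `B` with positive square root `S` (with inverse `Sinv`), then `T` has
real spectrum and `‖T^n - T_∞^n‖ ≤ μ^n ‖B^{1/2}‖ ‖B^{-1/2}‖` where `μ < 1` is the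
spectral radius of `T - T_∞`. -/
theorem stmt15 {V : Type} [NormedAddCommGroup V] [InnerProductSpace ℂ V]
    [FiniteDimensional ℂ V]
    (T B S Sinv : V →L[ℂ] V) (C : ℝ) (hC : ∀ n : ℕ, ‖T ^ n‖ ≤ C)
    (hBpos : ∀ v : V, v ≠ 0 →
      0 < (inner ℂ v (B v) : ℂ).re ∧ (inner ℂ v (B v) : ℂ).im = 0)
    (hdb : T * B = B * ContinuousLinearMap.adjoint T)
    (hSsa : IsSelfAdjoint S)
    (hSpos : ∀ v : V, v ≠ 0 → 0 < (inner ℂ v (S v) : ℂ).re)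
    (hS2 : S * S = B) (hSinv : S * Sinv = 1) (hSinv' : Sinv * S = 1)
    {ι : Type} [Fintype ι] [DecidableEq ι]
    (lam : ι → ℂ) (P : ι → (V →L[ℂ] V))
    (hinj : Function.Injective lam)
    (hT : T = ∑ i, lam i • P i)
    (hPP : ∀ i j, P i * P j = if i = j then P i else 0)
    (hsum : ∑ i, P i = 1)
    (μ : ℝ) (hμ0 : 0 ≤ μ) (hμ1 : μ < 1)
    (hμ : spectralRadius ℂ
        (T - ∑ i ∈ Finset.univ.filter (fun i => ‖lam i‖ = 1), lam i • P i) =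
      ENNReal.ofReal μ) :
    (∀ z ∈ spectrum ℂ T, z.im = 0) ∧
      ∀ n : ℕ, ‖T ^ n - (∑ i ∈ Finset.univ.filter (fun i => ‖lam i‖ = 1), lam i • P i) ^ n‖ ≤
        μ ^ n * ‖S‖ * ‖Sinv‖ := by
  have k1 : ∀ x : V →L[ℂ] V, S * (Sinv * x) = x := fun x => by rw [← mul_assoc, hSinv, one_mul]
  have k2 : ∀ x : V →L[ℂ] V, Sinv * (S * x) = x := fun x => by rw [← mul_assoc, hSinv', one_mul]
  have hstarS : star S = S := hSsa
  have hstarSinv : star Sinv = Sinv := by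
    have h1 : star Sinv * S = 1 := by
      have := congrArg star hSinv
      rwa [star_mul, star_one, hstarS] at this
    calc star Sinv = star Sinv * (S * Sinv) := by rw [hSinv, mul_one]
      _ = star Sinv * S * Sinv := by rw [mul_assoc]
      _ = Sinv := by rw [h1, one_mul]
  have hdb' : T * B = B * star T := by
    rw [ContinuousLinearMap.star_eq_adjoint]; exact hdb
  have hstT : star T = Sinv * (Sinv * (T * (S * S))) := by
    have h := hdb'
    rw [← hS2, mul_assoc] at h
    calc star T = Sinv * (Sinv * (S * (S * star T))) := by rw [k2, k2]
      _ = Sinv * (Sinv * (T * (S * S))) := by rw [← h]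
  set A : V →L[ℂ] V := Sinv * T * S with hAdef
  have hstA : IsSelfAdjoint A := by
    show star A = A
    rw [hAdef, star_mul, star_mul, hstarS, hstarSinv, hstT]
    simp only [mul_assoc, k1, hSinv, mul_one]
  set Q : ι → V →L[ℂ] V := fun i => Sinv * (P i * S) with hQdef
  have hconjsum : ∀ t : Finset ι,
      Sinv * (∑ i ∈ t, lam i • P i) * S = ∑ i ∈ t, lam i • Q i := by
    intro t
    simp only [hQdef, Finset.mul_sum, Finset.sum_mul, mul_smul_comm, smul_mul_assoc, mul_assoc]
  have hQQ : ∀ i j, Q i * Q j = if i = j then Q i else 0 := by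
    intro i j
    have e : Q i * Q j = Sinv * (P i * P j * S) := by
      simp only [hQdef]
      simp only [mul_assoc, k1]
    rw [e, hPP]
    by_cases h : i = j
    · simp [h, hQdef]
    · simp [h]
  have hQsum : ∑ i, Q i = 1 := by
    simp only [hQdef]
    rw [← Finset.mul_sum, ← Finset.sum_mul, hsum, one_mul, hSinv']
  have hAsum : A = ∑ i, lam i • Q i := by
    rw [hAdef, hT]; exact hconjsum Finset.univ
  have hAQ : ∀ i, A * Q i = lam i • Q i := by
    intro i
    rw [hAsum, Finset.sum_mul]
    have key : ∀ j, (lam j • Q j) * Q i = if j = i then lam j • Q j else 0 := by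
      intro j
      rw [smul_mul_assoc, hQQ]
      by_cases h : j = i <;> simp [h]
    rw [Finset.sum_congr rfl fun j _ => key j, Finset.sum_ite_eq', if_pos (Finset.mem_univ i)]
  have hQA : ∀ i, Q i * A = lam i • Q i := by
    intro i
    rw [hAsum, Finset.mul_sum]
    have key : ∀ j, Q i * (lam j • Q j) = if i = j then lam j • Q i else 0 := by
      intro j
      rw [mul_smul_comm, hQQ]
      by_cases h : i = j <;> simp [h]
    rw [Finset.sum_congr rfl fun j _ => key j, Finset.sum_ite_eq, if_pos (Finset.mem_univ i)]
  have hspecA : ∀ i, Q i ≠ 0 → lam i ∈ spectrum ℂ A := by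
    intro i hQi
    obtain ⟨v, hv⟩ : ∃ v, Q i v ≠ 0 := by
      by_contra h
      push_neg at h
      exact hQi (ContinuousLinearMap.ext fun v => by simp [h v])
    rw [spectrum.mem_iff]
    rintro ⟨u, hu⟩
    have hAv : A (Q i v) = lam i • Q i v := by
      have := congrArg (fun f : V →L[ℂ] V => f v) (hAQ i)
      simpa [ContinuousLinearMap.mul_apply] using this
    have h0 : (↑u : V →L[ℂ] V) (Q i v) = 0 := by
      rw [hu]
      simp [ContinuousLinearMap.sub_apply, Algebra.algebraMap_eq_smul_one,
        ContinuousLinearMap.smul_apply, ContinuousLinearMap.one_apply, hAv]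
    have hz : Q i v = 0 := by
      have h1 : (↑u⁻¹ : V →L[ℂ] V) ((↑u : V →L[ℂ] V) (Q i v)) = Q i v :=
        congrArg (fun f : V →L[ℂ] V => f (Q i v)) u.inv_mul
      rw [h0, map_zero] at h1
      exact h1.symm
    exact hv hz
  have hlc : ∀ i, Q i ≠ 0 → star (lam i) = lam i := by
    intro i hQi
    have h := hstA.mem_spectrum_eq_re (hspecA i hQi)
    rw [h]
    simp [Complex.star_def, Complex.conj_ofReal]
  have hAQs : ∀ j, Q j ≠ 0 → A * star (Q j) = lam j • star (Q j) := by
    intro j hj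
    have h := congrArg star (hQA j)
    rwa [star_mul, hstA.star_eq, star_smul, hlc j hj] at h
  have hQQs : ∀ i j, i ≠ j → Q i * star (Q j) = 0 := by
    intro i j hij
    by_cases hj : Q j = 0
    · simp [hj]
    by_cases hi : Q i = 0
    · simp [hi]
    have h1 : Q i * (A * star (Q j)) = lam j • (Q i * star (Q j)) := by
      rw [hAQs j hj, mul_smul_comm]
    have h2 : Q i * (A * star (Q j)) = lam i • (Q i * star (Q j)) := by
      rw [← mul_assoc, hQA i, smul_mul_assoc]
    have h3 : (lam i - lam j) • (Q i * star (Q j)) = 0 := by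
      rw [sub_smul, ← h2, h1, sub_self]
    have h4 : lam i - lam j ≠ 0 := sub_ne_zero.mpr fun h => hij (hinj h)
    exact (smul_eq_zero.mp h3).resolve_left h4
  have hQsum_star : ∑ i, star (Q i) = 1 := by
    rw [← star_sum, hQsum, star_one]
  have hQsa : ∀ j, star (Q j) = Q j := by
    intro j
    have e1 : star (Q j) = Q j * star (Q j) := by
      conv_lhs => rw [← one_mul (star (Q j)), ← hQsum, Finset.sum_mul]
      rw [Finset.sum_eq_single j (fun i _ hij => hQQs i j hij) (by simp)]
    have e2 : Q j = Q j * star (Q j) := by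
      conv_lhs => rw [← mul_one (Q j), ← hQsum_star, Finset.mul_sum]
      rw [Finset.sum_eq_single j (fun i _ hij => hQQs j i (Ne.symm hij)) (by simp)]
    rw [e1, ← e2]
  set Ti : V →L[ℂ] V := ∑ i ∈ Finset.univ.filter (fun i => ‖lam i‖ = 1), lam i • P i
    with hTid
  have hAinf : Sinv * Ti * S
      = ∑ i ∈ Finset.univ.filter (fun i => ‖lam i‖ = 1), lam i • Q i := by
    rw [hTid]; exact hconjsum _
  have hAinfsa : star (Sinv * Ti * S) = Sinv * Ti * S := by
    rw [hAinf, star_sum]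
    refine Finset.sum_congr rfl fun i _ => ?_
    by_cases hQi : Q i = 0
    · simp [hQi]
    · rw [star_smul, hlc i hQi, hQsa i]
  have hA'sa : IsSelfAdjoint (A - Sinv * Ti * S) := by
    show star _ = _
    rw [star_sub, hstA.star_eq, hAinfsa]
  let u : (V →L[ℂ] V)ˣ := ⟨S, Sinv, hSinv, hSinv'⟩
  have hconjT : (↑u : V →L[ℂ] V) * A * ↑u⁻¹ = T := by
    show S * A * Sinv = T
    rw [hAdef]
    simp only [mul_assoc, k1, hSinv, mul_one]
  have hspecT : spectrum ℂ T = spectrum ℂ A := by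
    rw [← hconjT, spectrum.units_conjugate]
  constructor
  · intro z hz
    rw [hspecT] at hz
    have h := hstA.mem_spectrum_eq_re hz
    rw [h]
    simp
  · have hsub : Sinv * (T - Ti) * S = A - Sinv * Ti * S := by
      rw [mul_sub, sub_mul, ← hAdef]
    have hconjR : (↑u : V →L[ℂ] V) * (A - Sinv * Ti * S) * ↑u⁻¹ = T - Ti := by
      rw [← hsub]
      show S * (Sinv * (T - Ti) * S) * Sinv = T - Ti
      simp only [mul_assoc, k1, hSinv, mul_one]
    have hspecR : spectralRadius ℂ (A - Sinv * Ti * S) = ENNReal.ofReal μ := by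
      have hs2 : spectrum ℂ (A - Sinv * Ti * S) = spectrum ℂ (T - Ti) := by
        rw [← hconjR, spectrum.units_conjugate]
      have he : spectralRadius ℂ (A - Sinv * Ti * S) = spectralRadius ℂ (T - Ti) := by
        unfold spectralRadius
        rw [hs2]
      rw [he]
      exact hμ
    have hnorm : ‖A - Sinv * Ti * S‖ = μ := by
      have h1 : (‖A - Sinv * Ti * S‖₊ : ℝ≥0∞) = ENNReal.ofReal μ := by
        rw [← hA'sa.spectralRadius_eq_nnnorm, hspecR]
      have h3 : ‖A - Sinv * Ti * S‖₊ = μ.toNNReal := by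
        rw [ENNReal.ofReal] at h1
        exact_mod_cast h1
      calc ‖A - Sinv * Ti * S‖ = (‖A - Sinv * Ti * S‖₊ : ℝ) := (coe_nnnorm _).symm
        _ = μ := by rw [h3]; exact Real.coe_toNNReal μ hμ0
    intro n
    rcases Nat.eq_zero_or_pos n with h0 | h1
    · subst h0
      simp only [pow_zero, sub_self, norm_zero, one_mul]
      positivity
    · have hTn : T ^ n = ∑ i, lam i ^ n • P i := by
        rw [hT]; exact sumProjPow lam P hPP _ n h1
      have hTin : Ti ^ n = ∑ i ∈ Finset.univ.filter (fun i => ‖lam i‖ = 1), lam i ^ n • P i := by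
        rw [hTid]; exact sumProjPow lam P hPP _ n h1
      have hsplit : ∀ g : ι → (V →L[ℂ] V),
          (∑ i ∈ Finset.univ.filter (fun i => ‖lam i‖ = 1), g i)
            + ∑ i ∈ Finset.univ.filter (fun i => ¬ ‖lam i‖ = 1), g i = ∑ i, g i :=
        fun g => Finset.sum_filter_add_sum_filter_not Finset.univ _ g
      have hRsum : T - Ti = ∑ i ∈ Finset.univ.filter (fun i => ¬ ‖lam i‖ = 1), lam i • P i := by
        rw [hT, hTid, ← hsplit (fun i => lam i • P i), add_sub_cancel_left]
      have hRn : (T - Ti) ^ n = T ^ n - Ti ^ n := by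
        rw [hRsum, sumProjPow lam P hPP _ n h1, hTn, hTin,
          ← hsplit (fun i => lam i ^ n • P i), add_sub_cancel_left]
      calc ‖T ^ n - Ti ^ n‖
          = ‖(↑u : V →L[ℂ] V) * (A - Sinv * Ti * S) ^ n * ↑u⁻¹‖ := by
            rw [← hRn, ← hconjR, conjPowAux u.mul_inv u.inv_mul]
        _ ≤ ‖(↑u : V →L[ℂ] V) * (A - Sinv * Ti * S) ^ n‖ * ‖(↑u⁻¹ : V →L[ℂ] V)‖ :=
            norm_mul_le _ _
        _ ≤ ‖(↑u : V →L[ℂ] V)‖ * ‖(A - Sinv * Ti * S) ^ n‖ * ‖(↑u⁻¹ : V →L[ℂ] V)‖ :=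
            mul_le_mul_of_nonneg_right (norm_mul_le _ _) (norm_nonneg _)
        _ ≤ ‖S‖ * ‖A - Sinv * Ti * S‖ ^ n * ‖Sinv‖ := by
            show ‖S‖ * ‖(A - Sinv * Ti * S) ^ n‖ * ‖Sinv‖ ≤ _
            have hpow : ‖(A - Sinv * Ti * S) ^ n‖ ≤ ‖A - Sinv * Ti * S‖ ^ n :=
              norm_pow_le' _ h1
            gcongr
        _ = μ ^ n * ‖S‖ * ‖Sinv‖ := by rw [hnorm]; ring
end

section
/- For any d×d complex matrix A and any positive-definite density matrix σ (σ > 0, tr σ = 1), the trace norm satisfies ‖A‖₁² ≤ tr[A* σ^{−1/2} A σ^{−1/2}]. -/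
open Matrix
open scoped ComplexOrder

/-- The positive semidefinite square root of a positive semidefinite matrix
(as `Matrix.PosSemidef.sqrt` was defined in Mathlib of December 2024). -/
noncomputable def Matrix.PosSemidef.sqrt {n : Type*} {𝕜 : Type*} [Fintype n] [DecidableEq n]
    [RCLike 𝕜] {A : Matrix n n 𝕜} (hA : A.PosSemidef) : Matrix n n 𝕜 :=
  hA.1.eigenvectorUnitary.1 * diagonal ((↑) ∘ (√·) ∘ hA.1.eigenvalues) *
    (star hA.1.eigenvectorUnitary : Matrix n n 𝕜)

section SqrtPort
open scoped MatrixOrder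

theorem Matrix.PosSemidef.sqrt_eq_cfcSqrt {d : ℕ} {A : Matrix (Fin d) (Fin d) ℂ}
    (hA : A.PosSemidef) : hA.sqrt = CFC.sqrt A := by
  rw [CFC.sqrt_eq_cfc, cfc_nnreal_eq_real _ A, hA.1.cfc_eq]
  simp only [IsHermitian.cfc, Unitary.conjStarAlgAut_apply, Matrix.PosSemidef.sqrt]
  congr 3
  funext i
  simp [Real.coe_toNNReal _ (hA.eigenvalues_nonneg i)]
  rw [max_eq_left (hA.eigenvalues_nonneg i)]

theorem Matrix.PosSemidef.posSemidef_sqrt {d : ℕ} {A : Matrix (Fin d) (Fin d) ℂ}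
    (hA : A.PosSemidef) : hA.sqrt.PosSemidef := by
  rw [hA.sqrt_eq_cfcSqrt]; exact (CFC.sqrt_nonneg A).posSemidef

theorem Matrix.PosSemidef.sqrt_mul_self {d : ℕ} {A : Matrix (Fin d) (Fin d) ℂ}
    (hA : A.PosSemidef) : hA.sqrt * hA.sqrt = A := by
  rw [hA.sqrt_eq_cfcSqrt]; exact CFC.sqrt_mul_sqrt_self A hA.nonneg

theorem Matrix.PosSemidef.eq_sqrt_of_sq_eq {d : ℕ} {A B : Matrix (Fin d) (Fin d) ℂ}
    (hA : A.PosSemidef) (hB : B.PosSemidef) (hAB : A ^ 2 = B) : A = hB.sqrt := by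
  rw [hB.sqrt_eq_cfcSqrt, eq_comm, CFC.sqrt_eq_iff B A hB.nonneg hA.nonneg, ← sq, hAB]

end SqrtPort

namespace Stmt17Aux
variable {d : ℕ}

noncomputable def vecOf (X : Matrix (Fin d) (Fin d) ℂ) : EuclideanSpace ℂ (Fin d × Fin d) :=
  WithLp.toLp 2 (fun p : Fin d × Fin d => X p.1 p.2)

lemma trace_eq_inner (X Y : Matrix (Fin d) (Fin d) ℂ) :
    (Xᴴ * Y).trace = inner ℂ (vecOf X) (vecOf Y) := by
  rw [PiLp.inner_apply]
  simp only [RCLike.inner_apply, vecOf]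
  rw [Matrix.trace]
  simp only [Matrix.diag_apply, Matrix.mul_apply, Matrix.conjTranspose_apply]
  rw [Fintype.sum_prod_type]
  rw [Finset.sum_comm]
  exact Finset.sum_congr rfl fun _ _ => Finset.sum_congr rfl fun _ _ => mul_comm _ _

lemma trace_sq_re (X : Matrix (Fin d) (Fin d) ℂ) :
    (Xᴴ * X).trace.re = ‖vecOf X‖ ^ 2 := by
  have h2 : RCLike.re (inner ℂ (vecOf X) (vecOf X) : ℂ) = ‖vecOf X‖ ^ 2 :=
    inner_self_eq_norm_sq (vecOf X)
  rw [trace_eq_inner]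
  simpa using h2

lemma trace_self_re_nonneg (X : Matrix (Fin d) (Fin d) ℂ) : 0 ≤ (Xᴴ * X).trace.re := by
  rw [trace_sq_re]; positivity

lemma trace_cs (X Y : Matrix (Fin d) (Fin d) ℂ) :
    ‖(Xᴴ * Y).trace‖ ^ 2 ≤ (Xᴴ * X).trace.re * (Yᴴ * Y).trace.re := by
  rw [trace_eq_inner, trace_sq_re, trace_sq_re]
  have h := norm_inner_le_norm (𝕜 := ℂ) (vecOf X) (vecOf Y)
  have h2 : ‖(inner ℂ (vecOf X) (vecOf Y) : ℂ)‖ = ‖(inner ℂ (vecOf X) (vecOf Y) : ℂ)‖ := rfl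
  rw [h2]
  calc ‖(inner ℂ (vecOf X) (vecOf Y) : ℂ)‖ ^ 2 ≤ (‖vecOf X‖ * ‖vecOf Y‖) ^ 2 := by
        apply pow_le_pow_left₀ (norm_nonneg _) h
    _ = ‖vecOf X‖ ^ 2 * ‖vecOf Y‖ ^ 2 := by ring

noncomputable def cd (V : Matrix (Fin d) (Fin d) ℂ) (f : Fin d → ℝ) : Matrix (Fin d) (Fin d) ℂ :=
  V * diagonal (fun i => (f i : ℂ)) * Vᴴ

lemma cd_mul {V : Matrix (Fin d) (Fin d) ℂ} (hV : Vᴴ * V = 1) (f g : Fin d → ℝ) :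
    cd V f * cd V g = cd V (fun i => f i * g i) := by
  have hc : ∀ Z : Matrix (Fin d) (Fin d) ℂ, Vᴴ * (V * Z) = Z := fun Z => by
    rw [← Matrix.mul_assoc, hV, Matrix.one_mul]
  unfold cd
  simp only [Matrix.mul_assoc, hc]
  rw [← Matrix.mul_assoc (diagonal _), Matrix.diagonal_mul_diagonal]
  congr 2
  ext i
  push_cast
  ring

lemma cd_herm (V : Matrix (Fin d) (Fin d) ℂ) (f : Fin d → ℝ) : (cd V f)ᴴ = cd V f := by
  unfold cd
  rw [conjTranspose_mul, conjTranspose_mul, conjTranspose_conjTranspose, diagonal_conjTranspose]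
  rw [Matrix.mul_assoc]
  congr 2
  ext i j
  by_cases h : i = j <;> simp [Matrix.diagonal, h, Complex.conj_ofReal]

end Stmt17Aux

set_option maxHeartbeats 1000000 in
open Stmt17Aux in
/-- For any `d×d` complex matrix `A` and any positive-definite density matrix `σ`
(`σ > 0`, `tr σ = 1`), the trace norm satisfies
`‖A‖₁² ≤ tr[A* σ^{-1/2} A σ^{-1/2}]`. -/
theorem stmt17 (d : ℕ) (A σ : Matrix (Fin d) (Fin d) ℂ)
    (hσ : σ.PosDef) (htr : σ.trace = 1) :
    ((Matrix.posSemidef_conjTranspose_mul_self A).sqrt.trace.re) ^ 2 ≤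
      (Aᴴ * (hσ.inv.posSemidef.sqrt) * A * (hσ.inv.posSemidef.sqrt)).trace.re := by
  classical
  set P : Matrix (Fin d) (Fin d) ℂ := (Matrix.posSemidef_conjTranspose_mul_self A).sqrt with hPdef
  have hP : P.PosSemidef := (Matrix.posSemidef_conjTranspose_mul_self A).posSemidef_sqrt
  have hPP : P * P = Aᴴ * A := (Matrix.posSemidef_conjTranspose_mul_self A).sqrt_mul_self
  set V : Matrix (Fin d) (Fin d) ℂ := (hP.1.eigenvectorUnitary : Matrix (Fin d) (Fin d) ℂ) with hVdef
  have hV : Vᴴ * V = 1 := by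
    have := Matrix.mem_unitaryGroup_iff'.mp hP.1.eigenvectorUnitary.2
    simpa [Matrix.star_eq_conjTranspose] using this
  set lam : Fin d → ℝ := hP.1.eigenvalues with hlam
  have hspec : P = cd V lam := by
    have h := hP.1.spectral_theorem
    rw [Unitary.conjStarAlgAut_apply] at h
    unfold cd
    convert h using 2
    all_goals rfl
  -- sigma side
  set s : Matrix (Fin d) (Fin d) ℂ := hσ.posSemidef.sqrt with hsdef
  have hs : s.PosSemidef := hσ.posSemidef.posSemidef_sqrt
  have hss : s * s = σ := hσ.posSemidef.sqrt_mul_self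
  have hσu : IsUnit σ.det := hσ.det_pos.ne'.isUnit
  have hsu : IsUnit s.det := by
    have : IsUnit (s.det * s.det) := by rw [← Matrix.det_mul, hss]; exact hσu
    exact isUnit_of_mul_isUnit_left this
  have hT : hσ.inv.posSemidef.sqrt = s⁻¹ := by
    refine (Matrix.PosSemidef.eq_sqrt_of_sq_eq hs.inv hσ.inv.posSemidef ?_).symm
    rw [pow_two, ← Matrix.mul_inv_rev, hss]
  set R : Matrix (Fin d) (Fin d) ℂ := hs.sqrt with hRdef
  have hR : R.PosSemidef := hs.posSemidef_sqrt
  have hRR : R * R = s := hs.sqrt_mul_self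
  have hRu : IsUnit R.det := by
    have : IsUnit (R.det * R.det) := by rw [← Matrix.det_mul, hRR]; exact hsu
    exact isUnit_of_mul_isUnit_left this
  have hR1 : R * R⁻¹ = 1 := Matrix.mul_nonsing_inv R hRu
  have hR2 : R⁻¹ * R = 1 := Matrix.nonsing_inv_mul R hRu
  have hRiH : (R⁻¹)ᴴ = R⁻¹ := hR.1.inv
  have hRH : Rᴴ = R := hR.1
  have hsH : sᴴ = s := hs.1
  have hsinv : s⁻¹ = R⁻¹ * R⁻¹ := by rw [← hRR, Matrix.mul_inv_rev]
  -- pseudoinverse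
  set g : Fin d → ℝ := fun i => if lam i = 0 then 0 else (lam i)⁻¹ with hg
  set K : Matrix (Fin d) (Fin d) ℂ := cd V g with hKdef
  have hKH : Kᴴ = K := cd_herm V g
  set B : Matrix (Fin d) (Fin d) ℂ := A * K with hBdef
  have hBH : Bᴴ = K * Aᴴ := by rw [hBdef, conjTranspose_mul, hKH]
  have hglam : (fun i => g i * lam i * lam i) = lam := by
    funext i
    by_cases h : lam i = 0
    · simp [hg, h]
    · rw [hg]; simp only [if_neg h]; rw [inv_mul_cancel₀ h, one_mul]
  have key1 : Bᴴ * A = P := by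
    rw [hBH, Matrix.mul_assoc, ← hPP, hspec]
    rw [hKdef, ← Matrix.mul_assoc, cd_mul hV, cd_mul hV]
    exact congrArg (cd V) hglam
  -- head helpers
  have hR1h : ∀ Z : Matrix (Fin d) (Fin d) ℂ, R * (R⁻¹ * Z) = Z := fun Z => by
    rw [← Matrix.mul_assoc, hR1, Matrix.one_mul]
  have hRRh : ∀ Z : Matrix (Fin d) (Fin d) ℂ, R * (R * Z) = s * Z := fun Z => by
    rw [← Matrix.mul_assoc, hRR]
  have key1h : ∀ Z : Matrix (Fin d) (Fin d) ℂ, Bᴴ * (A * Z) = P * Z := fun Z => by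
    rw [← Matrix.mul_assoc, key1]
  -- Q and its properties
  set Q : Matrix (Fin d) (Fin d) ℂ := B * Bᴴ with hQdef
  have hQH : Qᴴ = Q := by rw [hQdef, conjTranspose_mul, conjTranspose_conjTranspose]
  set e : Fin d → ℝ := fun i => if lam i = 0 then 0 else 1 with he
  have hBB : Bᴴ * B = cd V e := by
    rw [hBdef, ← Matrix.mul_assoc, Matrix.mul_assoc _ A, key1h]
    rw [hspec, hKdef, cd_mul hV]
    refine congrArg (cd V) (funext fun i => ?_)
    by_cases h : lam i = 0
    · simp [hg, he, h]
    · simp only [hg, he, if_neg h]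
      exact mul_inv_cancel₀ h
  have hBBh : ∀ Z : Matrix (Fin d) (Fin d) ℂ, Bᴴ * (B * Z) = cd V e * Z := fun Z => by
    rw [← Matrix.mul_assoc, hBB]
  have hBE : B * cd V e = B := by
    rw [hBdef, hKdef, Matrix.mul_assoc, cd_mul hV]
    refine congrArg (fun M => A * M) (congrArg (cd V) (funext fun i => ?_))
    by_cases h : lam i = 0 <;> simp [hg, he, h]
  have hBEh : ∀ Z : Matrix (Fin d) (Fin d) ℂ, B * (cd V e * Z) = B * Z := fun Z => by
    rw [← Matrix.mul_assoc, hBE]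
  have hQQ : Q * Q = Q := by
    rw [hQdef]
    simp only [Matrix.mul_assoc]
    rw [hBBh, hBEh]
  have hQh : ∀ Z : Matrix (Fin d) (Fin d) ℂ, B * (Bᴴ * Z) = Q * Z := fun Z => by
    rw [← Matrix.mul_assoc, ← hQdef]
  have hQQh : ∀ Z : Matrix (Fin d) (Fin d) ℂ, Q * (Q * Z) = Q * Z := fun Z => by
    rw [← Matrix.mul_assoc, hQQ]
  -- main players
  set X : Matrix (Fin d) (Fin d) ℂ := R * (B * R) with hXdef
  set Y : Matrix (Fin d) (Fin d) ℂ := R⁻¹ * (A * R⁻¹) with hYdef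
  set Y₂ : Matrix (Fin d) (Fin d) ℂ := Bᴴ * (s * B) with hY2def
  set N : Matrix (Fin d) (Fin d) ℂ := Q * (s * Q) with hNdef
  have hXH : Xᴴ = R * (Bᴴ * R) := by
    rw [hXdef]
    simp only [conjTranspose_mul, hRH, Matrix.mul_assoc]
  have hYH : Yᴴ = R⁻¹ * (Aᴴ * R⁻¹) := by
    rw [hYdef]
    simp only [conjTranspose_mul, hRiH, Matrix.mul_assoc]
  have hY2H : Y₂ᴴ = Y₂ := by
    rw [hY2def]
    simp only [conjTranspose_mul, conjTranspose_conjTranspose, hsH, Matrix.mul_assoc]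
  have hNH : Nᴴ = N := by
    rw [hNdef]
    simp only [conjTranspose_mul, hQH, hsH, Matrix.mul_assoc]
  -- trace identities
  have h6 : (Xᴴ * Y).trace = P.trace := by
    rw [hXH, hYdef]
    simp only [Matrix.mul_assoc, hR1h]
    rw [key1h, Matrix.trace_mul_comm]
    simp only [Matrix.mul_assoc]
    rw [hR2, Matrix.mul_one]
  have h5 : (Xᴴ * X).trace = (sᴴ * Y₂).trace := by
    rw [hXH, hXdef, hsH, hY2def]
    simp only [Matrix.mul_assoc, hRRh]
    rw [Matrix.trace_mul_comm]
    simp only [Matrix.mul_assoc]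
    rw [hRR, Matrix.trace_mul_comm s]
    simp only [Matrix.mul_assoc]
  have h7a : (Y₂ᴴ * Y₂).trace = (s * (Q * (s * Q))).trace := by
    rw [hY2H, hY2def]
    simp only [Matrix.mul_assoc]
    rw [Matrix.trace_mul_comm]
    simp only [Matrix.mul_assoc]
    rw [← hQdef, hQh]
  have h7c : (Nᴴ * N).trace = (s * (Q * (s * Q))).trace := by
    rw [hNH, hNdef]
    simp only [Matrix.mul_assoc, hQQh]
    rw [Matrix.trace_mul_comm]
    simp only [Matrix.mul_assoc]
    rw [hQQ]
  have h7b : (sᴴ * N).trace = (s * (Q * (s * Q))).trace := by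
    rw [hsH, hNdef]
  have h8 : (Yᴴ * Y).trace = (Aᴴ * (R⁻¹ * R⁻¹) * A * (R⁻¹ * R⁻¹)).trace := by
    rw [hYH, hYdef]
    simp only [Matrix.mul_assoc]
    rw [Matrix.trace_mul_comm R⁻¹]
    simp only [Matrix.mul_assoc]
  -- the inequality chain
  have hσtr : (sᴴ * s).trace.re = 1 := by rw [hsH, hss, htr]; exact Complex.one_re
  have ha0 : 0 ≤ (Nᴴ * N).trace.re := trace_self_re_nonneg N
  have hy20 : 0 ≤ (Y₂ᴴ * Y₂).trace.re := trace_self_re_nonneg Y₂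
  have hr0 : 0 ≤ (Yᴴ * Y).trace.re := trace_self_re_nonneg Y
  -- CS3 : a ≤ 1
  have c3 := trace_cs s N
  rw [hσtr, one_mul] at c3
  have hre3 : (Nᴴ * N).trace.re ≤ ‖(sᴴ * N).trace‖ := by
    rw [h7b, ← h7c]
    exact Complex.re_le_norm _
  have ha1 : (Nᴴ * N).trace.re ≤ 1 := by
    nlinarith [norm_nonneg ((sᴴ * N).trace)]
  -- CS2 : t ≤ 1
  have c2 := trace_cs s Y₂
  rw [hσtr, one_mul] at c2
  have hy21 : (Y₂ᴴ * Y₂).trace.re ≤ 1 := by rw [h7a, ← h7c]; exact ha1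
  have hre2 : (Xᴴ * X).trace.re ≤ ‖(sᴴ * Y₂).trace‖ := by
    rw [← h5]
    exact Complex.re_le_norm _
  have ht1 : (Xᴴ * X).trace.re ≤ 1 := by
    nlinarith [norm_nonneg ((sᴴ * Y₂).trace)]
  -- CS1
  have c1 := trace_cs X Y
  have hLHS : (P.trace.re) ^ 2 ≤ ‖(Xᴴ * Y).trace‖ ^ 2 := by
    rw [h6, ← sq_abs (P.trace.re)]
    exact pow_le_pow_left₀ (abs_nonneg _) (Complex.abs_re_le_norm _) 2
  rw [hT, hsinv]
  calc (P.trace.re) ^ 2 ≤ ‖(Xᴴ * Y).trace‖ ^ 2 := hLHS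
    _ ≤ (Xᴴ * X).trace.re * (Yᴴ * Y).trace.re := c1
    _ ≤ 1 * (Yᴴ * Y).trace.re := by
        exact mul_le_mul_of_nonneg_right ht1 hr0
    _ = (Aᴴ * (R⁻¹ * R⁻¹) * A * (R⁻¹ * R⁻¹)).trace.re := by rw [one_mul, h8]
end
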